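/- arXiv:math/0104043 — 4 statements merged into one kernel-verified Lean document; each statement's English description precedes it below -/
import Mathlib

section
/- For every deterministic initial configuration W_0 ∈ [0,∞)^{Λ^N}, the law of W_t converges weakly, as t → ∞, to the unique invariant probability measure μ^N of the silo process. -/
open MeasureTheory ProbabilityTheory Filter

noncomputable section

/-- The uniform distribution on `[0,1]`. -/
def unif01 : Measure ℝ := volume.restrict (Set.Icc (0:ℝ) 1)

/-- Truncation of a configuration to the box `Λ^N = {1,…,N}` (zero outside). -/
def trunc (N : ℕ) (w : ℤ → ℝ) : ℤ → ℝ :=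
  fun i => if 1 ≤ i ∧ i ≤ (N : ℤ) then w i else 0

/-- One step of the width-`N` silo dynamics with fractions `u` and added weights `v`. -/
def siloStep (N : ℕ) (u v w : ℤ → ℝ) : ℤ → ℝ :=
  trunc N fun i => v i + trunc N w (i + 1) * u (i + 1) + trunc N w (i - 1) * (1 - u (i - 1))

/-- `ν` is the product measure on `ℤ → ℝ` with all marginals `m`
(characterized through its finite-dimensional distributions). -/
def IsProductLaw (m : Measure ℝ) (ν : Measure (ℤ → ℝ)) : Prop :=
  IsProbabilityMeasure ν ∧
    ∀ I : Finset ℤ, ν.map (fun w (i : I) => w (i : ℤ)) = Measure.pi fun _ : I => m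

/-- The law on `ℤ → ℝ` which is iid `m` on the finite window `I` and `0` elsewhere. -/
def finExtLaw (I : Finset ℤ) (m : Measure ℝ) : Measure (ℤ → ℝ) :=
  (Measure.pi fun _ : I => m).map fun f i => if h : i ∈ I then f ⟨i, h⟩ else 0

/-- Law of the pair (fractions, weights) driving one step of the width-`N` silo. -/
def siloDriveLaw (N : ℕ) (νV : Measure ℝ) : Measure ((ℤ → ℝ) × (ℤ → ℝ)) :=
  (finExtLaw (Finset.Icc 0 ((N : ℤ) + 1)) unif01).prod (finExtLaw (Finset.Icc 1 (N : ℤ)) νV)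

/-- `μ` is carried by the state space `[0,∞)^{Λ^N}`. -/
def SiloSupported (N : ℕ) (μ : Measure (ℤ → ℝ)) : Prop :=
  μ {w | ∀ i : ℤ, 0 ≤ w i ∧ (¬(1 ≤ i ∧ i ≤ (N : ℤ)) → w i = 0)} = 1

/-- Hypotheses on the common law of the grain weights `V_t(i)`: a probability measure on
`[0,∞)` with mean `1` and finite variance. -/
def IsVLaw (νV : Measure ℝ) : Prop :=
  IsProbabilityMeasure νV ∧ νV {x | x < 0} = 0 ∧ (∫ x, x ∂νV) = 1 ∧
    Integrable (fun x => x ^ 2) νV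

/-- `μ` is an invariant probability measure for the width-`N` silo process. -/
def IsSiloInvariant (N : ℕ) (νV : Measure ℝ) (μ : Measure (ℤ → ℝ)) : Prop :=
  IsProbabilityMeasure μ ∧ SiloSupported N μ ∧
    (μ.prod (siloDriveLaw N νV)).map (fun p => siloStep N p.2.1 p.2.2 p.1) = μ

/-- The law of the silo process at time `t`, started from the distribution `μ0`. -/
def siloChainLaw (N : ℕ) (νV : Measure ℝ) (μ0 : Measure (ℤ → ℝ)) : ℕ → Measure (ℤ → ℝ)
  | 0 => μ0
  | t + 1 =>
      ((siloChainLaw N νV μ0 t).prod (siloDriveLaw N νV)).map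
        fun p => siloStep N p.2.1 p.2.2 p.1

/-- One step of the infinite silo model with fractions `u`. -/
def ismStep (u η : ℤ → ℝ) : ℤ → ℝ :=
  fun i => η (i - 1) * u (i - 1) + η (i + 1) * (1 - u (i + 1))

/-- `ν` is invariant for the infinite silo model. -/
def IsISMInvariant (ν : Measure (ℤ → ℝ)) : Prop :=
  ∀ κ : Measure (ℤ → ℝ), IsProductLaw unif01 κ →
    ((ν.prod κ).map fun p => ismStep p.2 p.1) = ν

/-- The shift `τ_1` on configurations. -/
def shift1 (η : ℤ → ℝ) : ℤ → ℝ := fun i => η (i - 1)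

/-- `ν` plays the role of `ν_ρ`: the product of Gamma(2, 2/ρ) laws for `ρ ≠ 0`,
and the point mass at the zero configuration for `ρ = 0`. -/
def IsNuRho (ρ : ℝ) (ν : Measure (ℤ → ℝ)) : Prop :=
  (ρ = 0 → ν = Measure.dirac fun _ => 0) ∧
    (ρ ≠ 0 → IsProductLaw (gammaMeasure 2 (2 / ρ)) ν)


/-!
Run the chain from `W₀` and the stationary chain from `μ` with the same fractions `U` and grains
`V`. The grains cancel in the difference, and the difference at site `j` is split into a uniform
fraction sent to `j - 1` and the rest sent to `j + 1`. The weights `a i = i (N + 1 - i)` vanish at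
`0` and `N + 1` and satisfy `a (j - 1) + a (j + 1) = 2 a j - 2`, so the weighted `ℓ¹` distance `D`
between the two chains contracts in mean, `E D' ≤ (1 - (N + 1)⁻²) D`. Iterating this on `min D 1`,
which needs no moment of `μ`, and dominated convergence give `E (min D 1) → 0`. After one step both
chains live on configurations vanishing off `Λ^N`, and on `ℝ^{Λ^N}` such a coupling bound makes
integrals of bounded Lipschitz functions converge, which characterises weak convergence.
-/

open scoped ENNReal NNReal Topology BoundedContinuousFunction

section Coupling

variable {Y : Type*} [PseudoEMetricSpace Y]

lemma enorm_sub_le_mul_min_edist_one {F : Y → ℝ} {C : ℝ} (hC : ∀ x y, dist (F x) (F y) ≤ C)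
    {L : ℝ≥0} (hF : LipschitzWith L F) (x y : Y) :
    ‖F x - F y‖ₑ ≤ max (ENNReal.ofReal C) L * min (edist x y) 1 := by
  rw [← edist_eq_enorm_sub]
  rcases le_total (edist x y) 1 with h | h
  · rw [min_eq_left h]
    exact (hF x y).trans (mul_le_mul_left (le_max_right _ _) _)
  · rw [min_eq_right h, mul_one, edist_dist]
    exact le_max_of_le_left (ENNReal.ofReal_le_ofReal (hC x y))

variable [MeasurableSpace Y] [OpensMeasurableSpace Y]

theorem tendsto_integral_map_fst_of_coupling {π : ℕ → Measure (Y × Y)}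
    [∀ t, IsProbabilityMeasure (π t)] {μ : Measure Y} (hsnd : ∀ t, (π t).map Prod.snd = μ)
    (hclose : Tendsto (fun t => ∫⁻ p, min (edist p.1 p.2) 1 ∂π t) atTop (𝓝 0)) (g : Y →ᵇ ℝ) :
    Tendsto (fun t => ∫ y, g y ∂(π t).map Prod.fst) atTop (𝓝 (∫ y, g y ∂μ)) := by
  have : IsProbabilityMeasure μ :=
    hsnd 0 ▸ Measure.isProbabilityMeasure_map measurable_snd.aemeasurable
  let P : ℕ → ProbabilityMeasure Y := fun t =>
    ⟨(π t).map Prod.fst, Measure.isProbabilityMeasure_map measurable_fst.aemeasurable⟩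
  suffices Tendsto P atTop (𝓝 (⟨μ, ‹_›⟩ : ProbabilityMeasure Y)) from
    ProbabilityMeasure.tendsto_iff_forall_integral_tendsto.1 this g
  refine tendsto_iff_forall_lipschitz_integral_tendsto.2 ?_
  rintro F ⟨C, hC⟩ ⟨L, hF⟩
  set K := max (ENNReal.ofReal C) L
  let G : Y →ᵇ ℝ := .mkOfBound ⟨F, hF.continuous⟩ C hC
  have hint : ∀ t, ∀ φ : Y × Y → Y, Measurable φ → Integrable (fun p => F (φ p)) (π t) :=
    fun t φ hφ => .of_bound (hF.continuous.measurable.comp hφ).aestronglyMeasurable ‖G‖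
      (ae_of_all _ fun p => G.norm_coe_le_norm (φ p))
  have hdiff : ∀ t,
      ∫ y, F y ∂(π t).map Prod.fst - ∫ y, F y ∂μ = ∫ p, (F p.1 - F p.2) ∂π t := by
    intro t
    rw [← hsnd t, integral_map measurable_fst.aemeasurable hF.continuous.aestronglyMeasurable,
      integral_map measurable_snd.aemeasurable hF.continuous.aestronglyMeasurable,
      ← integral_sub (hint t _ measurable_fst) (hint t _ measurable_snd)]
  have hK : K ≠ ⊤ := by simp [K]
  have hbound : Tendsto (fun t => K * ∫⁻ p, min (edist p.1 p.2) 1 ∂π t) atTop (𝓝 0) := by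
    simpa using ENNReal.Tendsto.const_mul hclose (Or.inr hK)
  rw [tendsto_iff_edist_tendsto_0]
  refine tendsto_of_tendsto_of_tendsto_of_le_of_le tendsto_const_nhds hbound
    (fun _ => zero_le) fun t => ?_
  calc edist _ _ = ‖∫ p, (F p.1 - F p.2) ∂π t‖ₑ :=
      (edist_eq_enorm_sub _ _).trans (congrArg enorm (hdiff t))
    _ ≤ ∫⁻ p, ‖F p.1 - F p.2‖ₑ ∂π t := enorm_integral_le_lintegral_enorm _
    _ ≤ ∫⁻ p, K * min (edist p.1 p.2) 1 ∂π t :=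
      lintegral_mono fun p => enorm_sub_le_mul_min_edist_one hC hF p.1 p.2
    _ = K * ∫⁻ p, min (edist p.1 p.2) 1 ∂π t := lintegral_const_mul' _ _ hK

end Coupling

section RandomIteration

variable {X Θ : Type*} [MeasurableSpace X] [MeasurableSpace Θ] (ρ : Measure Θ)

/-- The law at time `t` of `x (t + 1) = F (x t, θ t)` with `θ` i.i.d. of law `ρ`, independent of
`x 0 ∼ μ₀`. -/
def chainLaw (F : X × Θ → X) (μ₀ : Measure X) : ℕ → Measure X
  | 0 => μ₀
  | t + 1 => ((chainLaw F μ₀ t).prod ρ).map F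

def synchronousStep (F : X × Θ → X) (q : (X × X) × Θ) : X × X :=
  (F (q.1.1, q.2), F (q.1.2, q.2))

variable {F : X × Θ → X}

lemma chainLaw_eq_of_map_prod_eq {μ : Measure X} (hμ : (μ.prod ρ).map F = μ) (t : ℕ) :
    chainLaw ρ F μ t = μ := by
  induction t with
  | zero => rfl
  | succ t ih => rw [chainLaw, ih, hμ]

variable [IsProbabilityMeasure ρ]

lemma isProbabilityMeasure_chainLaw (hF : Measurable F) (μ₀ : Measure X) [IsProbabilityMeasure μ₀]
    (t : ℕ) : IsProbabilityMeasure (chainLaw ρ F μ₀ t) := by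
  induction t with
  | zero => assumption
  | succ t ih => exact Measure.isProbabilityMeasure_map hF.aemeasurable

lemma map_chainLaw_of_semiconj {Z : Type*} [MeasurableSpace Z] {G : Z × Θ → Z} {g : X → Z}
    (hF : Measurable F) (hG : Measurable G) (hg : Measurable g)
    (hFG : ∀ x θ, g (F (x, θ)) = G (g x, θ)) (μ₀ : Measure X) [IsProbabilityMeasure μ₀] (t : ℕ) :
    (chainLaw ρ F μ₀ t).map g = chainLaw ρ G (μ₀.map g) t := by
  induction t with
  | zero => rfl
  | succ t ih =>
    have := isProbabilityMeasure_chainLaw ρ hF μ₀ t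
    have hcomp : g ∘ F = G ∘ Prod.map g id := funext fun q => hFG q.1 q.2
    rw [chainLaw, chainLaw, ← ih, Measure.map_map hg hF, hcomp,
      ← Measure.map_map hG (hg.prodMap measurable_id), ← Measure.map_prod_map _ _ hg measurable_id,
      Measure.map_id]

lemma measurable_synchronousStep (hF : Measurable F) : Measurable (synchronousStep F) := by
  unfold synchronousStep; fun_prop

lemma map_fst_chainLaw_synchronousStep (hF : Measurable F) (π₀ : Measure (X × X))
    [IsProbabilityMeasure π₀] (t : ℕ) :
    (chainLaw ρ (synchronousStep F) π₀ t).map Prod.fst = chainLaw ρ F (π₀.map Prod.fst) t :=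
  map_chainLaw_of_semiconj ρ (measurable_synchronousStep hF) hF measurable_fst
    (fun _ _ => rfl) π₀ t

lemma map_snd_chainLaw_synchronousStep (hF : Measurable F) (π₀ : Measure (X × X))
    [IsProbabilityMeasure π₀] (t : ℕ) :
    (chainLaw ρ (synchronousStep F) π₀ t).map Prod.snd = chainLaw ρ F (π₀.map Prod.snd) t :=
  map_chainLaw_of_semiconj ρ (measurable_synchronousStep hF) hF measurable_snd
    (fun _ _ => rfl) π₀ t

variable {V : X → ℝ≥0∞} {c : ℝ≥0∞}

lemma lintegral_min_chainLaw_le (hF : Measurable F) (hV : Measurable V)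
    (hdrift : ∀ x, ∫⁻ θ, V (F (x, θ)) ∂ρ ≤ c * V x) (μ₀ : Measure X) (t : ℕ) (a M : ℝ≥0∞) :
    ∫⁻ x, min (a * V x) M ∂chainLaw ρ F μ₀ t ≤ ∫⁻ x, min (a * c ^ t * V x) M ∂μ₀ := by
  induction t generalizing a with
  | zero => simp [chainLaw]
  | succ t ih =>
    have hstep : ∀ x, ∫⁻ θ, min (a * V (F (x, θ))) M ∂ρ ≤ min (a * c * V x) M := fun x =>
      le_min ((lintegral_mono fun _ => min_le_left _ _).trans <| by
          rw [lintegral_const_mul a (f := fun θ => V (F (x, θ))) (by fun_prop), mul_assoc]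
          exact mul_le_mul_right (hdrift x) a)
        ((lintegral_mono fun _ => min_le_right _ _).trans (by simp))
    calc ∫⁻ x, min (a * V x) M ∂chainLaw ρ F μ₀ (t + 1)
        = ∫⁻ x, ∫⁻ θ, min (a * V (F (x, θ))) M ∂ρ ∂chainLaw ρ F μ₀ t := by
          rw [chainLaw, lintegral_map (by fun_prop) hF, lintegral_prod _ (by fun_prop)]
      _ ≤ ∫⁻ x, min (a * c * V x) M ∂chainLaw ρ F μ₀ t := lintegral_mono hstep
      _ ≤ ∫⁻ x, min (a * c ^ (t + 1) * V x) M ∂μ₀ := by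
          rw [pow_succ', ← mul_assoc]; exact ih _

theorem tendsto_lintegral_min_chainLaw (hF : Measurable F) (hV : Measurable V)
    (hdrift : ∀ x, ∫⁻ θ, V (F (x, θ)) ∂ρ ≤ c * V x) (hc : c < 1) (hV_ne_top : ∀ x, V x ≠ ⊤)
    (μ₀ : Measure X) [IsProbabilityMeasure μ₀] {M : ℝ≥0∞} (hM : M ≠ ⊤) :
    Tendsto (fun t => ∫⁻ x, min (V x) M ∂chainLaw ρ F μ₀ t) atTop (𝓝 0) := by
  have hlim : Tendsto (fun t => ∫⁻ x, min (c ^ t * V x) M ∂μ₀) atTop (𝓝 0) := by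
    have := tendsto_lintegral_of_dominated_convergence (f := fun _ => 0) (fun _ => M)
      (by fun_prop) (fun t => ae_of_all _ fun x => min_le_right (c ^ t * V x) M)
      (by simpa using hM) (ae_of_all μ₀ fun x => ?_)
    · simpa using this
    simpa using (ENNReal.Tendsto.mul_const (ENNReal.tendsto_pow_atTop_nhds_zero_of_lt_one hc)
      (Or.inr (hV_ne_top x))).min (tendsto_const_nhds (x := M))
  refine tendsto_of_tendsto_of_tendsto_of_le_of_le tendsto_const_nhds hlim (fun _ => zero_le)
    fun t => ?_
  simpa using lintegral_min_chainLaw_le ρ hF hV hdrift μ₀ t 1 M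

end RandomIteration

lemma tsum_mul_average_neighbours (a b : ℤ → ℝ≥0∞) :
    ∑' i, a i * ((b (i + 1) + b (i - 1)) / 2) = ∑' j, (a (j - 1) + a (j + 1)) / 2 * b j := by
  calc ∑' i, a i * ((b (i + 1) + b (i - 1)) / 2)
      = ∑' i, a i * b (i + 1) * 2⁻¹ + ∑' i, a i * b (i - 1) * 2⁻¹ := by
        rw [← ENNReal.tsum_add]; congr 1; funext i; rw [div_eq_mul_inv]; ring
    _ = ∑' j, a (j - 1) * b j * 2⁻¹ + ∑' j, a (j + 1) * b j * 2⁻¹ := by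
        congr 1
        · simpa using (Equiv.addRight 1).tsum_eq fun j => a (j - 1) * b j * 2⁻¹
        · simpa using (Equiv.subRight 1).tsum_eq fun j => a (j + 1) * b j * 2⁻¹
    _ = ∑' j, (a (j - 1) + a (j + 1)) / 2 * b j := by
        rw [← ENNReal.tsum_add]; congr 1; funext j; rw [div_eq_mul_inv]; ring

section SiloDrive

instance : IsProbabilityMeasure unif01 := by
  constructor
  rw [unif01, Measure.restrict_apply_univ, Real.volume_Icc, sub_zero, ENNReal.ofReal_one]

def extendByZero (I : Finset ℤ) (y : I → ℝ) : ℤ → ℝ :=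
  fun i => if h : i ∈ I then y ⟨i, h⟩ else 0

lemma continuous_extendByZero (I : Finset ℤ) : Continuous (extendByZero I) :=
  continuous_pi fun i => by
    by_cases h : i ∈ I <;> simp only [extendByZero, h, dite_true, dite_false] <;> fun_prop

lemma map_eval_finExtLaw {I : Finset ℤ} {m : Measure ℝ} [IsProbabilityMeasure m] {j : ℤ}
    (hj : j ∈ I) : (finExtLaw I m).map (fun w => w j) = m := by
  classical
  have heval : (fun w : ℤ → ℝ => w j) ∘ extendByZero I = Function.eval ⟨j, hj⟩ := by
    funext y; simp [extendByZero, hj]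
  change ((Measure.pi fun _ : I => m).map (extendByZero I)).map _ = m
  rw [Measure.map_map (measurable_pi_apply j) (continuous_extendByZero I).measurable, heval,
    Measure.pi_map_eval]
  simp

instance (I : Finset ℤ) (m : Measure ℝ) [IsProbabilityMeasure m] :
    IsProbabilityMeasure (finExtLaw I m) :=
  Measure.isProbabilityMeasure_map (continuous_extendByZero I).measurable.aemeasurable

instance (N : ℕ) (νV : Measure ℝ) [IsProbabilityMeasure νV] :
    IsProbabilityMeasure (siloDriveLaw N νV) := by
  rw [siloDriveLaw]; infer_instance

lemma lintegral_siloDriveLaw_fraction {N : ℕ} (νV : Measure ℝ) [IsProbabilityMeasure νV] {j : ℤ}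
    (hj : j ∈ Finset.Icc 0 ((N : ℤ) + 1)) {g : ℝ → ℝ≥0∞} (hg : Measurable g) :
    ∫⁻ θ, g (θ.1 j) ∂siloDriveLaw N νV = ∫⁻ x, g x ∂unif01 := by
  have hmarg : (siloDriveLaw N νV).map (fun θ => θ.1 j) = unif01 := by
    rw [show (fun θ : (ℤ → ℝ) × (ℤ → ℝ) => θ.1 j) = (fun w => w j) ∘ Prod.fst from rfl,
      ← Measure.map_map (measurable_pi_apply j) measurable_fst, siloDriveLaw,
      Measure.map_fst_prod, measure_univ, one_smul, map_eval_finExtLaw hj]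
  rw [← hmarg, lintegral_map hg (by fun_prop)]

lemma lintegral_enorm_unif01 {f : ℝ → ℝ} (hf : Continuous f)
    (hf₀ : ∀ x ∈ Set.Icc (0 : ℝ) 1, 0 ≤ f x) :
    ∫⁻ x, ‖f x‖ₑ ∂unif01 = ENNReal.ofReal (∫ x in (0 : ℝ)..1, f x) := by
  rw [intervalIntegral.integral_of_le zero_le_one, ← integral_Icc_eq_integral_Ioc,
    ofReal_integral_eq_lintegral_ofReal hf.integrableOn_Icc
      ((ae_restrict_mem measurableSet_Icc).mono hf₀), unif01]
  exact setLIntegral_congr_fun measurableSet_Icc fun x hx => Real.enorm_eq_ofReal (hf₀ x hx)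

lemma lintegral_enorm_id_unif01 : ∫⁻ x, ‖x‖ₑ ∂unif01 = 2⁻¹ := by
  refine (lintegral_enorm_unif01 (f := fun x => x) continuous_id fun x hx => hx.1).trans ?_
  rw [integral_id, ← ENNReal.ofReal_ofNat 2, ← ENNReal.ofReal_inv_of_pos two_pos]
  norm_num

lemma lintegral_enorm_one_sub_unif01 : ∫⁻ x, ‖1 - x‖ₑ ∂unif01 = 2⁻¹ := by
  rw [lintegral_enorm_unif01 (by fun_prop) fun x hx => sub_nonneg.2 hx.2,
    intervalIntegral.integral_sub intervalIntegrable_const intervalIntegral.intervalIntegrable_id,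
    integral_id, ← ENNReal.ofReal_ofNat 2, ← ENNReal.ofReal_inv_of_pos two_pos]
  norm_num

end SiloDrive

section SiloDynamics

variable (N : ℕ)

abbrev siloBox : Finset ℤ := Finset.Icc 1 (N : ℤ)

lemma mem_siloBox {N : ℕ} {i : ℤ} : i ∈ siloBox N ↔ 1 ≤ i ∧ i ≤ (N : ℤ) := Finset.mem_Icc

def siloMap (p : (ℤ → ℝ) × ((ℤ → ℝ) × (ℤ → ℝ))) : ℤ → ℝ := siloStep N p.2.1 p.2.2 p.1

@[fun_prop]
lemma measurable_trunc : Measurable (trunc N) :=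
  measurable_pi_lambda _ fun i => by
    by_cases h : 1 ≤ i ∧ i ≤ (N : ℤ)
    · simpa [trunc, h] using measurable_pi_apply i
    · simp [trunc, h]

lemma measurable_siloMap : Measurable (siloMap N) := by
  unfold siloMap siloStep
  refine (measurable_trunc N).comp (measurable_pi_lambda _ fun i => ?_)
  fun_prop

lemma trunc_siloStep (u v w : ℤ → ℝ) : trunc N (siloStep N u v w) = siloStep N u v w := by
  funext i; unfold siloStep trunc; split_ifs <;> rfl

lemma extendByZero_restrict (w : ℤ → ℝ) :
    extendByZero (siloBox N) ((siloBox N).restrict w) = trunc N w := by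
  funext i; simp [extendByZero, trunc, Finset.restrict]

lemma siloStep_of_mem {i : ℤ} (hi : 1 ≤ i ∧ i ≤ (N : ℤ)) (u v w : ℤ → ℝ) :
    siloStep N u v w i =
      v i + trunc N w (i + 1) * u (i + 1) + trunc N w (i - 1) * (1 - u (i - 1)) :=
  if_pos hi

lemma enorm_siloStep_sub_le (u v x y : ℤ → ℝ) (i : ℤ) :
    ‖siloStep N u v x i - siloStep N u v y i‖ₑ ≤
      ‖trunc N x (i + 1) - trunc N y (i + 1)‖ₑ * ‖u (i + 1)‖ₑ +
        ‖trunc N x (i - 1) - trunc N y (i - 1)‖ₑ * ‖1 - u (i - 1)‖ₑ := by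
  by_cases hi : 1 ≤ i ∧ i ≤ (N : ℤ)
  · rw [siloStep_of_mem N hi, siloStep_of_mem N hi, ← enorm_mul, ← enorm_mul]
    exact le_of_eq_of_le (congrArg _ (by ring)) (enorm_add_le _ _)
  · simp [siloStep, trunc, hi]

end SiloDynamics

section SiloContraction

variable (N : ℕ)

def siloWeight (i : ℤ) : ℝ≥0∞ := ENNReal.ofReal (i * (N + 1 - i))

def siloRate : ℝ≥0∞ := ENNReal.ofReal (1 - ((N + 1 : ℝ) ^ 2)⁻¹)

def siloDist (p : (ℤ → ℝ) × (ℤ → ℝ)) : ℝ≥0∞ :=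
  ∑' i, siloWeight N i * ‖trunc N p.1 i - trunc N p.2 i‖ₑ

lemma siloRate_lt_one : siloRate N < 1 :=
  ENNReal.ofReal_lt_one.2 (sub_lt_self 1 (by positivity))

variable {N}

lemma one_le_siloWeight {i : ℤ} (hi : 1 ≤ i ∧ i ≤ (N : ℤ)) : 1 ≤ siloWeight N i := by
  have h₁ : (1 : ℝ) ≤ i := by exact_mod_cast hi.1
  have h₂ : (i : ℝ) ≤ N := by exact_mod_cast hi.2
  rw [siloWeight, ← ENNReal.ofReal_one]
  exact ENNReal.ofReal_le_ofReal (by nlinarith)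

lemma siloWeight_sub_one_add_siloWeight_add_one_le {j : ℤ} (hj : 1 ≤ j ∧ j ≤ (N : ℤ)) :
    (siloWeight N (j - 1) + siloWeight N (j + 1)) / 2 ≤ siloRate N * siloWeight N j := by
  have h₁ : (1 : ℝ) ≤ j := by exact_mod_cast hj.1
  have h₂ : (j : ℝ) ≤ N := by exact_mod_cast hj.2
  have hK : (1 : ℝ) ≤ ((N : ℝ) + 1) ^ 2 := by nlinarith
  have hle : (j : ℝ) * (N + 1 - j) * (((N : ℝ) + 1) ^ 2)⁻¹ ≤ 1 := by
    rw [← div_eq_mul_inv, div_le_one (by linarith)]; nlinarith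
  have hsum : ((j - 1 : ℤ) : ℝ) * (N + 1 - (j - 1 : ℤ)) + ((j + 1 : ℤ) : ℝ) * (N + 1 - (j + 1 : ℤ))
      = 2 * (j * (N + 1 - j)) - 2 := by push_cast; ring
  unfold siloWeight siloRate
  rw [← ENNReal.ofReal_add (by push_cast; nlinarith) (by push_cast; nlinarith),
    ← ENNReal.ofReal_mul (sub_nonneg.2 (inv_le_one_of_one_le₀ hK)),
    ← ENNReal.ofReal_ofNat 2, ← ENNReal.ofReal_div_of_pos two_pos, hsum]
  exact ENNReal.ofReal_le_ofReal (by nlinarith)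

lemma measurable_siloDist : Measurable (siloDist N) :=
  Measurable.tsum fun _ => by fun_prop

lemma siloDist_ne_top (p : (ℤ → ℝ) × (ℤ → ℝ)) : siloDist N p ≠ ⊤ := by
  rw [siloDist, tsum_eq_sum (s := siloBox N) fun i hi => by
    simp [trunc, mem_siloBox.not.1 hi]]
  exact ENNReal.sum_ne_top.2 fun _ _ => ENNReal.mul_ne_top ENNReal.ofReal_ne_top enorm_ne_top

lemma edist_restrict_le_siloDist (p : (ℤ → ℝ) × (ℤ → ℝ)) :
    edist ((siloBox N).restrict p.1) ((siloBox N).restrict p.2) ≤ siloDist N p := by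
  refine edist_pi_le_iff.2 fun i => ?_
  have hi := mem_siloBox.1 i.2
  calc edist (p.1 i) (p.2 i) = ‖trunc N p.1 i - trunc N p.2 i‖ₑ := by
        simp [trunc, hi, edist_eq_enorm_sub]
    _ ≤ siloWeight N i * ‖trunc N p.1 i - trunc N p.2 i‖ₑ :=
        le_mul_of_one_le_left' (one_le_siloWeight hi)
    _ ≤ siloDist N p :=
        ENNReal.le_tsum (f := fun j => siloWeight N j * ‖trunc N p.1 j - trunc N p.2 j‖ₑ) _

lemma siloDist_siloStep_le (u v x y : ℤ → ℝ) :
    siloDist N (siloStep N u v x, siloStep N u v y) ≤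
      ∑' i, siloWeight N i * (‖trunc N x (i + 1) - trunc N y (i + 1)‖ₑ * ‖u (i + 1)‖ₑ +
        ‖trunc N x (i - 1) - trunc N y (i - 1)‖ₑ * ‖1 - u (i - 1)‖ₑ) := by
  refine ENNReal.tsum_le_tsum fun i => ?_
  rw [trunc_siloStep, trunc_siloStep]
  gcongr
  exact enorm_siloStep_sub_le N u v x y i

lemma lintegral_siloDist_siloStep_le (νV : Measure ℝ) [IsProbabilityMeasure νV] (x y : ℤ → ℝ) :
    ∫⁻ θ, siloDist N (siloStep N θ.1 θ.2 x, siloStep N θ.1 θ.2 y) ∂siloDriveLaw N νV ≤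
      siloRate N * siloDist N (x, y) := by
  set Δ : ℤ → ℝ≥0∞ := fun j => ‖trunc N x j - trunc N y j‖ₑ
  have hΔ : ∀ j, ¬(1 ≤ j ∧ j ≤ (N : ℤ)) → Δ j = 0 := fun j hj => by simp [Δ, trunc, hj]
  -- off the box `Δ j = 0`; on it the fraction `θ.1 j` is uniform on `[0, 1]`
  have hmean : ∀ j, ∫⁻ θ, Δ j * ‖θ.1 j‖ₑ ∂siloDriveLaw N νV = Δ j / 2 ∧
      ∫⁻ θ, Δ j * ‖1 - θ.1 j‖ₑ ∂siloDriveLaw N νV = Δ j / 2 := by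
    intro j
    by_cases hj : 1 ≤ j ∧ j ≤ (N : ℤ)
    · have hj' : j ∈ Finset.Icc 0 ((N : ℤ) + 1) := Finset.mem_Icc.2 ⟨by omega, by omega⟩
      rw [lintegral_const_mul _ (by fun_prop), lintegral_const_mul _ (by fun_prop),
        lintegral_siloDriveLaw_fraction νV hj' measurable_enorm,
        lintegral_siloDriveLaw_fraction νV hj' (g := fun u => ‖1 - u‖ₑ) (by fun_prop),
        lintegral_enorm_id_unif01, lintegral_enorm_one_sub_unif01, div_eq_mul_inv]
      exact ⟨rfl, rfl⟩
    · simp [hΔ j hj]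
  calc ∫⁻ θ, siloDist N (siloStep N θ.1 θ.2 x, siloStep N θ.1 θ.2 y) ∂siloDriveLaw N νV
      ≤ ∫⁻ θ, ∑' i, siloWeight N i *
          (Δ (i + 1) * ‖θ.1 (i + 1)‖ₑ + Δ (i - 1) * ‖1 - θ.1 (i - 1)‖ₑ) ∂siloDriveLaw N νV :=
        lintegral_mono fun θ => siloDist_siloStep_le θ.1 θ.2 x y
    _ = ∑' i, siloWeight N i * ((Δ (i + 1) + Δ (i - 1)) / 2) := by
        rw [lintegral_tsum fun i => by fun_prop]
        congr 1; funext i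
        rw [lintegral_const_mul _ (by fun_prop), lintegral_add_left (by fun_prop), (hmean _).1,
          (hmean _).2, ENNReal.add_div]
    _ = ∑' j, (siloWeight N (j - 1) + siloWeight N (j + 1)) / 2 * Δ j :=
        tsum_mul_average_neighbours _ _
    _ ≤ ∑' j, siloRate N * (siloWeight N j * Δ j) := by
        refine ENNReal.tsum_le_tsum fun j => ?_
        by_cases hj : 1 ≤ j ∧ j ≤ (N : ℤ)
        · rw [← mul_assoc]; gcongr; exact siloWeight_sub_one_add_siloWeight_add_one_le hj
        · simp [hΔ j hj]
    _ = siloRate N * siloDist N (x, y) := ENNReal.tsum_mul_left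

end SiloContraction

section SiloCoupling

variable (N : ℕ) (νV : Measure ℝ)

lemma siloChainLaw_eq_chainLaw (μ₀ : Measure (ℤ → ℝ)) :
    siloChainLaw N νV μ₀ = chainLaw (siloDriveLaw N νV) (siloMap N) μ₀ := by
  funext t
  induction t with
  | zero => rfl
  | succ t ih => rw [siloChainLaw, chainLaw, ← ih]; rfl

lemma integral_siloChainLaw_succ {μ₀ : Measure (ℤ → ℝ)} (t : ℕ) {f : (ℤ → ℝ) → ℝ}
    (hf : Continuous f) :
    ∫ w, f w ∂siloChainLaw N νV μ₀ (t + 1) =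
      ∫ y, f (extendByZero (siloBox N) y)
        ∂(siloChainLaw N νV μ₀ (t + 1)).map (siloBox N).restrict := by
  rw [integral_map (Finset.measurable_restrict _).aemeasurable
    (hf.comp (continuous_extendByZero _)).aestronglyMeasurable]
  simp_rw [extendByZero_restrict]
  rw [siloChainLaw_eq_chainLaw, chainLaw,
    integral_map (measurable_siloMap N).aemeasurable hf.aestronglyMeasurable,
    integral_map (f := fun w => f (trunc N w)) (measurable_siloMap N).aemeasurable
      (hf.measurable.comp (measurable_trunc N)).aestronglyMeasurable]
  simp only [siloMap, trunc_siloStep]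

def siloCoupling (μ₀ μ₁ : Measure (ℤ → ℝ)) (t : ℕ) :
    Measure ((siloBox N → ℝ) × (siloBox N → ℝ)) :=
  (chainLaw (siloDriveLaw N νV) (synchronousStep (siloMap N)) (μ₀.prod μ₁) t).map
    (Prod.map (siloBox N).restrict (siloBox N).restrict)

variable [IsProbabilityMeasure νV] (μ₀ μ₁ : Measure (ℤ → ℝ)) [IsProbabilityMeasure μ₀]
  [IsProbabilityMeasure μ₁]

instance (t : ℕ) : IsProbabilityMeasure (siloCoupling N νV μ₀ μ₁ t) :=
  have := isProbabilityMeasure_chainLaw (siloDriveLaw N νV)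
    (measurable_synchronousStep (measurable_siloMap N)) (μ₀.prod μ₁) t
  Measure.isProbabilityMeasure_map (by fun_prop)

lemma map_fst_siloCoupling (t : ℕ) :
    (siloCoupling N νV μ₀ μ₁ t).map Prod.fst =
      (siloChainLaw N νV μ₀ t).map (siloBox N).restrict := by
  rw [siloCoupling, Measure.map_map measurable_fst (by fun_prop), Prod.map_fst',
    ← Measure.map_map (Finset.measurable_restrict _) measurable_fst,
    map_fst_chainLaw_synchronousStep _ (measurable_siloMap N), Measure.map_fst_prod, measure_univ,
    one_smul, siloChainLaw_eq_chainLaw]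

lemma map_snd_siloCoupling (t : ℕ) :
    (siloCoupling N νV μ₀ μ₁ t).map Prod.snd =
      (siloChainLaw N νV μ₁ t).map (siloBox N).restrict := by
  rw [siloCoupling, Measure.map_map measurable_snd (by fun_prop), Prod.map_snd',
    ← Measure.map_map (Finset.measurable_restrict _) measurable_snd,
    map_snd_chainLaw_synchronousStep _ (measurable_siloMap N), Measure.map_snd_prod, measure_univ,
    one_smul, siloChainLaw_eq_chainLaw]

theorem tendsto_lintegral_min_edist_siloCoupling :
    Tendsto (fun t => ∫⁻ p, min (edist p.1 p.2) 1 ∂siloCoupling N νV μ₀ μ₁ t) atTop (𝓝 0) := by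
  refine tendsto_of_tendsto_of_tendsto_of_le_of_le tendsto_const_nhds
    (tendsto_lintegral_min_chainLaw _ (measurable_synchronousStep (measurable_siloMap N))
      measurable_siloDist (fun p => lintegral_siloDist_siloStep_le νV p.1 p.2) (siloRate_lt_one N)
      siloDist_ne_top (μ₀.prod μ₁) ENNReal.one_ne_top) (fun _ => zero_le) fun t => ?_
  exact (lintegral_map_le _ _).trans
    (lintegral_mono fun p => min_le_min_right 1 (edist_restrict_le_siloDist p))

end SiloCoupling

theorem silo_convergence_to_invariant_measure_general (N : ℕ)
    (νV : Measure ℝ) (hνV : IsVLaw νV)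
    (W0 : ℤ → ℝ)
    (μ : Measure (ℤ → ℝ)) (hμ : IsSiloInvariant N νV μ) :
    ∀ f : BoundedContinuousFunction (ℤ → ℝ) ℝ,
      Filter.Tendsto (fun t => ∫ w, f w ∂(siloChainLaw N νV (Measure.dirac W0) t))
        Filter.atTop (nhds (∫ w, f w ∂μ)) := by
  intro f
  obtain ⟨hμ, -, hinv⟩ := hμ
  have := hνV.1
  have hstat : ∀ t, siloChainLaw N νV μ t = μ := by
    rw [siloChainLaw_eq_chainLaw]; exact chainLaw_eq_of_map_prod_eq _ hinv
  let g : (siloBox N → ℝ) →ᵇ ℝ := f.compContinuous ⟨_, continuous_extendByZero (siloBox N)⟩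
  have hg := tendsto_integral_map_fst_of_coupling (fun t => by rw [map_snd_siloCoupling, hstat])
    (tendsto_lintegral_min_edist_siloCoupling N νV (.dirac W0) μ) g
  rw [← tendsto_add_atTop_iff_nat 1]
  convert hg.comp (tendsto_add_atTop_nat 1) using 2 with t
  · rw [Function.comp_apply, map_fst_siloCoupling]
    exact integral_siloChainLaw_succ N νV t f.continuous
  · conv_lhs => rw [← hstat 1]
    rw [integral_siloChainLaw_succ N νV 0 f.continuous, hstat]
    rfl

/-- Started from any deterministic configuration `W₀ ∈ [0,∞)^{Λ^N}`, the law of the silo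
process at time `t` converges weakly, as `t → ∞`, to the (unique) invariant measure. -/
theorem silo_convergence_to_invariant_measure (N : ℕ) (hN : 1 ≤ N)
    (νV : Measure ℝ) (hνV : IsVLaw νV)
    (W0 : ℤ → ℝ) (hW0 : ∀ i : ℤ, 0 ≤ W0 i ∧ (¬(1 ≤ i ∧ i ≤ (N : ℤ)) → W0 i = 0))
    (μ : Measure (ℤ → ℝ)) (hμ : IsSiloInvariant N νV μ) :
    ∀ f : BoundedContinuousFunction (ℤ → ℝ) ℝ,
      Filter.Tendsto (fun t => ∫ w, f w ∂(siloChainLaw N νV (Measure.dirac W0) t))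
        Filter.atTop (nhds (∫ w, f w ∂μ)) :=
  silo_convergence_to_invariant_measure_general N νV hνV W0 μ hμ
end
end

section
/- For each ρ > 0 the measure ν_ρ is reversible for one step of the infinite silo model: if η has law ν_ρ, the random variables (U(i) : i ∈ ℤ) are i.i.d. uniform on [0,1] and independent of η, and η₁ is defined by η₁(i) = η(i−1)U(i−1) + η(i+1)(1 − U(i+1)) for all i ∈ ℤ, then for all bounded measurable functions f, g on [0,∞)^ℤ depending on finitely many coordinates, E[f(η) g(η₁)] = E[g(η) f(η₁)]. -/
open MeasureTheory ProbabilityTheory Filter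

noncomputable section

/-- `f` depends on finitely many coordinates (is a cylinder function). -/
def DependsOnFinitelyMany (f : (ℤ → ℝ) → ℝ) : Prop :=
  ∃ I : Finset ℤ, ∀ x y : ℤ → ℝ, (∀ i ∈ I, x i = y i) → f x = f y

/-! Split the mass at each site as `η i = η i * U i + η i * (1 - U i)`: the part sent right and
the part sent left. A Gamma(2, λ) variable cut by an independent uniform fraction gives two
independent Exp(λ) variables, so under `ν.prod κ` the moved masses `(a, b)` form an i.i.d.
exponential family indexed by two copies of `ℤ`. In terms of them `η = a + b` and
`η₁ i = a (i - 1) + b (i + 1)`. The reindexing `(a, b) ↦ (b (· + 1), a (· - 1))`, which runs the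
step backwards in time, preserves that family and exchanges `η` with `η₁`, so `(η, η₁)` and
`(η₁, η)` have the same law. -/

open Real Set
open scoped ENNReal

instance isProbabilityMeasure_unif01 : IsProbabilityMeasure unif01 := by
  constructor
  simp [unif01]

theorem Real.lintegral_comp_mul_left {c : ℝ} (hc : c ≠ 0) (F : ℝ → ℝ≥0∞) :
    ∫⁻ u, F (c * u) = ENNReal.ofReal |c⁻¹| * ∫⁻ y, F y := by
  calc ∫⁻ u, F (c * u) = ∫⁻ y, F y ∂(volume.map (c * ·)) :=
        ((Homeomorph.mulLeft₀ c hc).measurableEmbedding.lintegral_map F).symm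
    _ = ENNReal.ofReal |c⁻¹| * ∫⁻ y, F y := by
        rw [Real.map_volume_mul_left hc, lintegral_smul_measure, smul_eq_mul]

theorem Real.setLIntegral_Icc_comp_mul_left {x : ℝ} (hx : 0 < x) (F : ℝ → ℝ≥0∞) :
    ∫⁻ u in Icc 0 1, F (x * u) = ENNReal.ofReal x⁻¹ * ∫⁻ y in Icc 0 x, F y := by
  have hind : (Icc 0 1).indicator (fun u => F (x * u)) =
      fun u => (Icc 0 x).indicator F (x * u) := by
    funext u
    have : x * u ∈ Icc 0 x ↔ u ∈ Icc 0 1 := by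
      simp only [mem_Icc]
      constructor
      · rintro ⟨h1, h2⟩; exact ⟨nonneg_of_mul_nonneg_right (by linarith) hx, by nlinarith⟩
      · rintro ⟨h1, h2⟩; exact ⟨by positivity, by nlinarith⟩
    by_cases hu : u ∈ Icc 0 1
    · simp [indicator_of_mem hu, indicator_of_mem (this.2 hu)]
    · simp [indicator_of_notMem hu, indicator_of_notMem (mt this.1 hu)]
  rw [← lintegral_indicator measurableSet_Icc, hind, Real.lintegral_comp_mul_left hx.ne',
    lintegral_indicator measurableSet_Icc, abs_of_pos (inv_pos.2 hx)]

theorem gammaPDF_two_of_nonneg {l x : ℝ} (hx : 0 ≤ x) :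
    gammaPDF 2 l x = ENNReal.ofReal (l ^ 2 * x * exp (-(l * x))) := by
  rw [gammaPDF_of_nonneg hx, Real.Gamma_two, show (2:ℝ) - 1 = 1 by norm_num, Real.rpow_one,
    div_one, show l ^ (2:ℝ) = l ^ 2 from Real.rpow_natCast l 2]

theorem exponentialPDF_mul_exponentialPDF_sub {l : ℝ} (hl : 0 ≤ l) (x y : ℝ) :
    exponentialPDF l y * exponentialPDF l (x - y) =
      (Icc 0 x).indicator (fun _ => ENNReal.ofReal (l ^ 2 * exp (-(l * x)))) y := by
  by_cases hy : y ∈ Icc 0 x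
  · rw [indicator_of_mem hy, exponentialPDF_of_nonneg hy.1,
      exponentialPDF_of_nonneg (sub_nonneg.2 hy.2), ← ENNReal.ofReal_mul (by positivity)]
    congr 1
    rw [show -(l * x) = -(l * y) + -(l * (x - y)) by ring, exp_add]
    ring
  · rw [indicator_of_notMem hy]
    rcases not_and_or.1 hy with hy | hy
    · rw [exponentialPDF_of_neg (not_le.1 hy), zero_mul]
    · rw [exponentialPDF_of_neg (x := x - y) (by linarith [not_le.1 hy]), mul_zero]

theorem gammaPDF_two_mul_setLIntegral_Icc {l : ℝ} (hl : 0 ≤ l) {x : ℝ} (hx : x ≠ 0)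
    (h : ℝ × ℝ → ℝ≥0∞) :
    gammaPDF 2 l x * ∫⁻ u in Icc 0 1, h (x * u, x * (1 - u)) =
      ∫⁻ y, exponentialPDF l y * exponentialPDF l (x - y) * h (y, x - y) := by
  have hind : ∀ y, exponentialPDF l y * exponentialPDF l (x - y) * h (y, x - y) =
      (Icc 0 x).indicator (fun y => ENNReal.ofReal (l ^ 2 * exp (-(l * x))) * h (y, x - y)) y := by
    intro y
    rw [exponentialPDF_mul_exponentialPDF_sub hl x]
    by_cases hy : y ∈ Icc 0 x <;> simp [hy]
  rw [lintegral_congr hind, lintegral_indicator measurableSet_Icc,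
    lintegral_const_mul' _ _ ENNReal.ofReal_ne_top]
  rcases hx.lt_or_gt with hx | hx
  · simp [gammaPDF_of_neg hx, Icc_eq_empty_of_lt hx]
  · simp_rw [mul_one_sub]
    rw [gammaPDF_two_of_nonneg hx.le,
      Real.setLIntegral_Icc_comp_mul_left hx (fun y => h (y, x - y)), ← mul_assoc,
      ← ENNReal.ofReal_mul (by positivity)]
    congr 2
    field_simp

theorem lintegral_lintegral_exponentialPDF_mul_sub {l : ℝ} {h : ℝ × ℝ → ℝ≥0∞} (hh : Measurable h) :
    ∫⁻ x, ∫⁻ y, exponentialPDF l y * exponentialPDF l (x - y) * h (y, x - y) =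
      ∫⁻ y, exponentialPDF l y * ∫⁻ z, exponentialPDF l z * h (y, z) := by
  have hexp : Measurable (exponentialPDF l) := (measurable_exponentialPDFReal l).ennreal_ofReal
  rw [lintegral_lintegral_swap (by fun_prop)]
  congr 1 with y
  rw [← lintegral_add_right_eq_self _ y, ← lintegral_const_mul _ (by fun_prop)]
  simp only [add_sub_cancel_right, mul_assoc]

theorem map_gammaMeasure_two_prod_unif01 {l : ℝ} (hl : 0 < l) :
    ((gammaMeasure 2 l).prod unif01).map (fun p : ℝ × ℝ => (p.1 * p.2, p.1 * (1 - p.2))) =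
      (expMeasure l).prod (expMeasure l) := by
  have : IsProbabilityMeasure (expMeasure l) := isProbabilityMeasure_expMeasure hl
  have hexp : Measurable (exponentialPDF l) := (measurable_exponentialPDFReal l).ennreal_ofReal
  have hexpMeasure : expMeasure l = volume.withDensity (exponentialPDF l) := rfl
  refine Measure.ext_of_lintegral _ fun h hh => ?_
  have hsplit : Measurable fun p : ℝ × ℝ => h (p.1 * p.2, p.1 * (1 - p.2)) := by fun_prop
  rw [lintegral_map hh (by fun_prop), lintegral_prod _ hsplit.aemeasurable,
    lintegral_prod _ hh.aemeasurable]
  calc ∫⁻ x, ∫⁻ u, h (x * u, x * (1 - u)) ∂unif01 ∂gammaMeasure 2 l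
      = ∫⁻ x, gammaPDF 2 l x * ∫⁻ u in Icc 0 1, h (x * u, x * (1 - u)) :=
        lintegral_withDensity_eq_lintegral_mul _ (measurable_gammaPDFReal 2 l).ennreal_ofReal
          hsplit.lintegral_prod_right'
    _ = ∫⁻ x, ∫⁻ y, exponentialPDF l y * exponentialPDF l (x - y) * h (y, x - y) := by
        refine lintegral_congr_ae ?_
        filter_upwards [(countable_singleton (0 : ℝ)).ae_notMem volume] with x hx
        exact gammaPDF_two_mul_setLIntegral_Icc hl.le hx h
    _ = ∫⁻ y, exponentialPDF l y * ∫⁻ z, exponentialPDF l z * h (y, z) :=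
        lintegral_lintegral_exponentialPDF_mul_sub hh
    _ = ∫⁻ y, ∫⁻ z, h (y, z) ∂expMeasure l ∂expMeasure l := by
        rw [hexpMeasure, lintegral_withDensity_eq_lintegral_mul _ hexp
          (hexpMeasure ▸ hh.lintegral_prod_right')]
        congr 1 with y
        exact congrArg _ (lintegral_withDensity_eq_lintegral_mul _ hexp (by fun_prop)).symm

theorem IsProductLaw.eq_infinitePi {m : Measure ℝ} [IsProbabilityMeasure m]
    {ν : Measure (ℤ → ℝ)} (h : IsProductLaw m ν) : ν = Measure.infinitePi fun _ => m :=
  have := h.1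
  IsProjectiveLimit.unique h.2 (Measure.isProjectiveLimit_infinitePi _)

theorem measurePreserving_arrowProdEquivProdArrow_infinitePi {ι α β : Type*}
    [MeasurableSpace α] [MeasurableSpace β] (μ : ι → Measure α) (ν : ι → Measure β)
    [∀ i, IsProbabilityMeasure (μ i)] [∀ i, IsProbabilityMeasure (ν i)] :
    MeasurePreserving (MeasurableEquiv.arrowProdEquivProdArrow α β ι)
      (Measure.infinitePi fun i => (μ i).prod (ν i))
      ((Measure.infinitePi μ).prod (Measure.infinitePi ν)) := by
  refine ⟨by fun_prop, ?_⟩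
  rw [MeasurableEquiv.map_apply_eq_iff_map_symm_apply_eq]
  refine (Measure.isProjectiveLimit_infinitePi _).unique fun I => ?_
  have hrestrict : I.restrict ∘ (MeasurableEquiv.arrowProdEquivProdArrow α β ι).symm =
      (MeasurableEquiv.arrowProdEquivProdArrow α β I).symm ∘ Prod.map I.restrict I.restrict :=
    rfl
  rw [Measure.map_map (by fun_prop) (by fun_prop), hrestrict,
    ← Measure.map_map (by fun_prop) (by fun_prop),
    ← Measure.map_prod_map _ _ (by fun_prop) (by fun_prop), Measure.infinitePi_map_restrict,
    Measure.infinitePi_map_restrict]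
  exact ((measurePreserving_arrowProdEquivProdArrow α β I _ _).symm _).map_eq

def splitMass (u η : ℤ → ℝ) : (ℤ → ℝ) × (ℤ → ℝ) :=
  (fun i => η i * u i, fun i => η i * (1 - u i))

def recombine (c : (ℤ → ℝ) × (ℤ → ℝ)) : (ℤ → ℝ) × (ℤ → ℝ) :=
  (c.1 + c.2, fun i => c.1 (i - 1) + c.2 (i + 1))

def reverseMass (c : (ℤ → ℝ) × (ℤ → ℝ)) : (ℤ → ℝ) × (ℤ → ℝ) :=
  (fun i => c.2 (i + 1), fun i => c.1 (i - 1))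

theorem recombine_splitMass (u η : ℤ → ℝ) : recombine (splitMass u η) = (η, ismStep u η) := by
  refine Prod.ext (funext fun i => ?_) rfl
  simp only [recombine, splitMass, Pi.add_apply]
  ring

theorem recombine_reverseMass (c : (ℤ → ℝ) × (ℤ → ℝ)) :
    recombine (reverseMass c) = (recombine c).swap := by
  ext i <;> simp [recombine, reverseMass, add_comm]

@[fun_prop]
theorem measurable_recombine : Measurable recombine := by
  unfold recombine
  fun_prop

@[fun_prop]
theorem measurable_reverseMass : Measurable reverseMass := by
  unfold reverseMass
  fun_prop

theorem measurable_splitMass_swap :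
    Measurable fun p : (ℤ → ℝ) × (ℤ → ℝ) => splitMass p.2 p.1 := by
  unfold splitMass
  fun_prop

theorem map_reverseMass_prod_infinitePi (m : Measure ℝ) [IsProbabilityMeasure m] :
    ((Measure.infinitePi fun _ : ℤ => m).prod (Measure.infinitePi fun _ => m)).map reverseMass =
      (Measure.infinitePi fun _ => m).prod (Measure.infinitePi fun _ => m) := by
  have hrev : reverseMass = Prod.map (fun a i => a (i + 1)) (fun a i => a (i - 1)) ∘ Prod.swap :=
    rfl
  rw [hrev, ← Measure.map_map (by fun_prop) measurable_swap, Measure.prod_swap,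
    ← Measure.map_prod_map _ _ (by fun_prop) (by fun_prop),
    Measure.map_infinitePi_infinitePi_of_inj (add_left_injective 1),
    Measure.map_infinitePi_infinitePi_of_inj (sub_left_injective (b := 1))]

theorem IsProductLaw.map_splitMass {l : ℝ} (hl : 0 < l) {ν κ : Measure (ℤ → ℝ)}
    (hν : IsProductLaw (gammaMeasure 2 l) ν) (hκ : IsProductLaw unif01 κ) :
    (ν.prod κ).map (fun p => splitMass p.2 p.1) =
      (Measure.infinitePi fun _ : ℤ => expMeasure l).prod
        (Measure.infinitePi fun _ => expMeasure l) := by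
  have : IsProbabilityMeasure (gammaMeasure 2 l) := isProbabilityMeasure_gammaMeasure two_pos hl
  have : IsProbabilityMeasure (expMeasure l) := isProbabilityMeasure_expMeasure hl
  have hsplit : (fun p => splitMass p.2 p.1) ∘ MeasurableEquiv.arrowProdEquivProdArrow ℝ ℝ ℤ =
      MeasurableEquiv.arrowProdEquivProdArrow ℝ ℝ ℤ ∘
        fun c i => ((c i).1 * (c i).2, (c i).1 * (1 - (c i).2)) :=
    rfl
  rw [hν.eq_infinitePi, hκ.eq_infinitePi,
    ← (measurePreserving_arrowProdEquivProdArrow_infinitePi _ _).map_eq,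
    Measure.map_map measurable_splitMass_swap (by fun_prop), hsplit,
    ← Measure.map_map (by fun_prop) (by fun_prop),
    Measure.infinitePi_map_pi _ (f := fun _ (z : ℝ × ℝ) => (z.1 * z.2, z.1 * (1 - z.2)))
      (fun _ => by fun_prop),
    map_gammaMeasure_two_prod_unif01 hl]
  exact (measurePreserving_arrowProdEquivProdArrow_infinitePi _ _).map_eq

theorem IsProductLaw.map_pair_ismStep_swap {l : ℝ} (hl : 0 < l) {ν κ : Measure (ℤ → ℝ)}
    (hν : IsProductLaw (gammaMeasure 2 l) ν) (hκ : IsProductLaw unif01 κ) :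
    ((ν.prod κ).map fun p => (p.1, ismStep p.2 p.1)).map Prod.swap =
      (ν.prod κ).map fun p => (p.1, ismStep p.2 p.1) := by
  have : IsProbabilityMeasure (expMeasure l) := isProbabilityMeasure_expMeasure hl
  have hpair : (fun p : (ℤ → ℝ) × (ℤ → ℝ) => (p.1, ismStep p.2 p.1)) =
      recombine ∘ fun p => splitMass p.2 p.1 :=
    funext fun p => (recombine_splitMass p.2 p.1).symm
  have hswap : Prod.swap ∘ recombine = recombine ∘ reverseMass :=
    funext fun c => (recombine_reverseMass c).symm
  rw [hpair, ← Measure.map_map measurable_recombine measurable_splitMass_swap,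
    hν.map_splitMass hl hκ, Measure.map_map measurable_swap measurable_recombine, hswap,
    ← Measure.map_map measurable_recombine measurable_reverseMass, map_reverseMass_prod_infinitePi]

theorem nuRho_reversible_for_ISM_general (ρ : ℝ) (hρ : 0 < ρ)
    (ν κ : Measure (ℤ → ℝ))
    (hν : IsProductLaw (gammaMeasure 2 (2 / ρ)) ν) (hκ : IsProductLaw unif01 κ)
    (f g : (ℤ → ℝ) → ℝ) (hfm : Measurable f) (hgm : Measurable g) :
    (∫ p : (ℤ → ℝ) × (ℤ → ℝ), f p.1 * g (ismStep p.2 p.1) ∂(ν.prod κ)) =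
      ∫ p : (ℤ → ℝ) × (ℤ → ℝ), g p.1 * f (ismStep p.2 p.1) ∂(ν.prod κ) := by
  set law := (ν.prod κ).map fun p => (p.1, ismStep p.2 p.1)
  have hpair : Measurable fun p : (ℤ → ℝ) × (ℤ → ℝ) => (p.1, ismStep p.2 p.1) := by
    unfold ismStep
    fun_prop
  have hswap : MeasurePreserving Prod.swap law law :=
    ⟨measurable_swap, hν.map_pair_ismStep_swap (by positivity) hκ⟩
  calc ∫ p, f p.1 * g (ismStep p.2 p.1) ∂(ν.prod κ)
      = ∫ q, f q.1 * g q.2 ∂law :=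
        (integral_map hpair.aemeasurable
          ((hfm.comp measurable_fst).mul (hgm.comp measurable_snd)).aestronglyMeasurable).symm
    _ = ∫ q, f q.2 * g q.1 ∂law :=
        (hswap.integral_comp MeasurableEquiv.prodComm.measurableEmbedding _).symm
    _ = ∫ q, g q.1 * f q.2 ∂law := by simp_rw [mul_comm]
    _ = ∫ p, g p.1 * f (ismStep p.2 p.1) ∂(ν.prod κ) :=
        integral_map hpair.aemeasurable
          ((hgm.comp measurable_fst).mul (hfm.comp measurable_snd)).aestronglyMeasurable

/-- For each `ρ > 0` the product Gamma measure `ν_ρ` is reversible for one step of the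
infinite silo model: with `η ~ ν_ρ` and iid uniform fractions `U` independent of `η`,
`E[f(η) g(η₁)] = E[g(η) f(η₁)]` for all bounded measurable cylinder functions `f, g`,
where `η₁(i) = η(i-1)U(i-1) + η(i+1)(1-U(i+1))`. -/
theorem nuRho_reversible_for_ISM (ρ : ℝ) (hρ : 0 < ρ)
    (ν κ : Measure (ℤ → ℝ))
    (hν : IsProductLaw (gammaMeasure 2 (2 / ρ)) ν) (hκ : IsProductLaw unif01 κ)
    (f g : (ℤ → ℝ) → ℝ) (hfm : Measurable f) (hgm : Measurable g)
    (hfb : ∃ C : ℝ, ∀ x, |f x| ≤ C) (hgb : ∃ C : ℝ, ∀ x, |g x| ≤ C)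
    (hfc : DependsOnFinitelyMany f) (hgc : DependsOnFinitelyMany g) :
    (∫ p : (ℤ → ℝ) × (ℤ → ℝ), f p.1 * g (ismStep p.2 p.1) ∂(ν.prod κ)) =
      ∫ p : (ℤ → ℝ) × (ℤ → ℝ), g p.1 * f (ismStep p.2 p.1) ∂(ν.prod κ) :=
  nuRho_reversible_for_ISM_general ρ hρ ν κ hν hκ f g hfm hgm
end
end

section
/- For each ρ > 0 the measure ν_ρ is invariant for the infinite silo model: if η has law ν_ρ, the random variables (U(i) : i ∈ ℤ) are i.i.d. uniform on [0,1] and independent of η, and η₁ is defined by η₁(i) = η(i−1)U(i−1) + η(i+1)(1 − U(i+1)) for all i ∈ ℤ, then η₁ also has law ν_ρ. -/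
open MeasureTheory ProbabilityTheory Filter

noncomputable section

/-!
Beta–gamma algebra: if `X ~ Γ(2, r)` and `U ~ U[0,1]` are independent, then `XU` and `X(1 - U)`
are independent `Exp(r)` variables, because both laws have joint density `r² e^{-r(a+b)}` on the
quadrant. Hence, under `ν_ρ ⊗ κ`, the pairs `(η(j)U(j), η(j)(1 - U(j)))`, `j ∈ ℤ`, are i.i.d.
pairs of independent `Exp(2/ρ)` variables. `η₁(i)` adds the first coordinate at `i - 1` to the
second at `i + 1`; the two coordinate families are independent and each stays i.i.d. after a
shift, so the `η₁(i)` are i.i.d. sums of two independent `Exp(2/ρ)` variables, i.e. `Γ(2, 2/ρ)`.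
-/

open Real Set
open scoped ENNReal

instance inst_s9 : IsProbabilityMeasure unif01 :=
  ⟨by simp [unif01, Real.volume_Icc]⟩

namespace ProbabilityTheory

lemma measurable_gammaPDF (a r : ℝ) : Measurable (gammaPDF a r) :=
  (measurable_gammaPDFReal a r).ennreal_ofReal

lemma expMeasure_eq_withDensity (r : ℝ) :
    expMeasure r = volume.withDensity (exponentialPDF r) := rfl

lemma measurable_exponentialPDF (r : ℝ) : Measurable (exponentialPDF r) :=
  (measurable_exponentialPDFReal r).ennreal_ofReal

lemma exponentialPDF_mul_exponentialPDF_sub {r : ℝ} (hr : 0 ≤ r) (x a : ℝ) :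
    exponentialPDF r a * exponentialPDF r (x - a)
      = (Icc 0 x).indicator (fun _ => ENNReal.ofReal (r ^ 2 * exp (-(r * x)))) a := by
  by_cases ha : 0 ≤ a
  · by_cases hax : a ≤ x
    · rw [indicator_of_mem (show a ∈ Icc 0 x from ⟨ha, hax⟩), exponentialPDF_of_nonneg ha,
        exponentialPDF_of_nonneg (sub_nonneg.2 hax), ← ENNReal.ofReal_mul (by positivity),
        mul_mul_mul_comm, ← exp_add]
      ring_nf
    · rw [indicator_of_notMem (fun h => hax h.2), exponentialPDF_of_neg (x := x - a) (by linarith),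
        mul_zero]
  · rw [indicator_of_notMem (fun h => ha h.1), exponentialPDF_of_neg (by linarith), zero_mul]

lemma lintegral_expMeasure_prod {r : ℝ} (hr : 0 ≤ r) {f : ℝ × ℝ → ℝ≥0∞} (hf : Measurable f) :
    ∫⁻ p, f p ∂(expMeasure r).prod (expMeasure r)
      = ∫⁻ x, ENNReal.ofReal (r ^ 2 * exp (-(r * x))) * ∫⁻ a in Icc 0 x, f (a, x - a) := by
  have hpdf := measurable_exponentialPDF r
  rw [expMeasure_eq_withDensity, prod_withDensity hpdf hpdf,
    lintegral_withDensity_eq_lintegral_mul _ (by fun_prop) hf,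
    ← (measurePreserving_prod_sub volume volume).lintegral_comp (by fun_prop),
    lintegral_prod_symm _ (by fun_prop)]
  refine lintegral_congr fun x => ?_
  rw [← lintegral_const_mul _ (by fun_prop), ← lintegral_indicator measurableSet_Icc]
  refine lintegral_congr fun a => ?_
  simp only [Pi.mul_apply, exponentialPDF_mul_exponentialPDF_sub hr]
  by_cases h : a ∈ Icc 0 x <;> simp [h]

lemma gammaPDF_two (r x : ℝ) :
    gammaPDF 2 r x = ENNReal.ofReal (r ^ 2 * exp (-(r * x))) * ENNReal.ofReal x := by
  rcases lt_or_ge x 0 with hx | hx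
  · rw [gammaPDF_of_neg hx, ENNReal.ofReal_of_nonpos hx.le, mul_zero]
  · rw [gammaPDF_of_nonneg hx, ← ENNReal.ofReal_mul (by positivity), Gamma_two,
      show (2:ℝ) - 1 = 1 by norm_num, rpow_one, show (2:ℝ) = ((2:ℕ):ℝ) by norm_num, rpow_natCast]
    ring_nf

lemma ofReal_mul_setLIntegral_Icc_zero_one_comp_mul (x : ℝ) {g : ℝ → ℝ≥0∞} (hg : Measurable g) :
    ENNReal.ofReal x * ∫⁻ u in Icc 0 1, g (x * u) = ∫⁻ a in Icc 0 x, g a := by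
  rcases le_or_gt x 0 with hx | hx
  · rw [ENNReal.ofReal_of_nonpos hx, zero_mul, setLIntegral_measure_zero _ _
      (by rw [volume_Icc, ENNReal.ofReal_of_nonpos (by linarith)])]
  · conv_rhs => rw [← smul_map_volume_mul_left hx.ne', abs_of_pos hx]
    rw [Measure.restrict_smul, lintegral_smul_measure, setLIntegral_map measurableSet_Icc hg
      (measurable_const_mul x), preimage_const_mul_Icc₀ _ _ hx, zero_div, div_self hx.ne',
      smul_eq_mul]

lemma expMeasure_conv_expMeasure {r : ℝ} (hr : 0 ≤ r) :
    expMeasure r ∗ expMeasure r = gammaMeasure 2 r := by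
  refine Measure.ext_of_lintegral _ fun g hg => ?_
  rw [Measure.conv, lintegral_map hg measurable_add, lintegral_expMeasure_prod hr (by fun_prop),
    gammaMeasure, lintegral_withDensity_eq_lintegral_mul _ (measurable_gammaPDF 2 r) hg]
  refine lintegral_congr fun x => ?_
  simp only [add_sub_cancel, setLIntegral_const, Real.volume_Icc, sub_zero, Pi.mul_apply,
    gammaPDF_two]
  ring

lemma map_gammaMeasure_two_prod_unif01 {r : ℝ} (hr : 0 ≤ r) :
    ((gammaMeasure 2 r).prod unif01).map (fun p => (p.1 * p.2, p.1 * (1 - p.2)))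
      = (expMeasure r).prod (expMeasure r) := by
  refine Measure.ext_of_lintegral _ fun f hf => ?_
  rw [lintegral_map hf (by fun_prop), lintegral_prod _ (by fun_prop), gammaMeasure,
    lintegral_withDensity_eq_lintegral_mul _ (measurable_gammaPDF 2 r)
      (by fun_prop), lintegral_expMeasure_prod hr hf]
  refine lintegral_congr fun x => ?_
  simp only [Pi.mul_apply, gammaPDF_two, mul_assoc, unif01]
  congr 1
  simp only [mul_sub, mul_one]
  exact ofReal_mul_setLIntegral_Icc_zero_one_comp_mul x (g := fun a => f (a, x - a)) (by fun_prop)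

end ProbabilityTheory

namespace MeasureTheory.Measure

variable {ι α β : Type*} [MeasurableSpace α] [MeasurableSpace β]

theorem infinitePi_map_arrowProdEquivProdArrow (μ : ι → Measure α) (ν : ι → Measure β)
    [∀ i, IsProbabilityMeasure (μ i)] [∀ i, IsProbabilityMeasure (ν i)] :
    (infinitePi fun i => (μ i).prod (ν i)).map (MeasurableEquiv.arrowProdEquivProdArrow α β ι)
      = (infinitePi μ).prod (infinitePi ν) := by
  rw [MeasurableEquiv.map_apply_eq_iff_map_symm_apply_eq]
  refine (isProjectiveLimit_infinitePi fun i => (μ i).prod (ν i)).unique fun I => ?_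
  rw [map_map (I.measurable_restrict) (MeasurableEquiv.measurable _)]
  calc ((infinitePi μ).prod (infinitePi ν)).map
        ((MeasurableEquiv.arrowProdEquivProdArrow α β I).symm ∘ Prod.map I.restrict I.restrict)
      = ((Measure.pi fun i : I => μ i).prod (Measure.pi fun i : I => ν i)).map
          (MeasurableEquiv.arrowProdEquivProdArrow α β I).symm := by
        rw [← infinitePi_map_restrict μ, ← infinitePi_map_restrict ν,
          map_prod_map _ _ I.measurable_restrict I.measurable_restrict,
          map_map (MeasurableEquiv.measurable _) (by fun_prop)]
    _ = Measure.pi fun i : I => (μ i).prod (ν i) :=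
        (measurePreserving_arrowProdEquivProdArrow α β I _ _).symm.map_eq

theorem infinitePi_prod_map_pi {γ : ι → Type*} [∀ i, MeasurableSpace (γ i)]
    (μ : ι → Measure α) (ν : ι → Measure β)
    [∀ i, IsProbabilityMeasure (μ i)] [∀ i, IsProbabilityMeasure (ν i)]
    {f : (i : ι) → α × β → γ i} (hf : ∀ i, Measurable (f i)) :
    ((infinitePi μ).prod (infinitePi ν)).map (fun p i => f i (p.1 i, p.2 i))
      = infinitePi fun i => ((μ i).prod (ν i)).map (f i) := by
  rw [← infinitePi_map_arrowProdEquivProdArrow, map_map (by fun_prop)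
    (MeasurableEquiv.measurable _), ← infinitePi_map_pi _ hf]
  rfl

theorem infinitePi_map_comp_equiv {κ : Type*} (μ : Measure α) [IsProbabilityMeasure μ]
    (σ : κ ≃ ι) : (infinitePi fun _ : ι => μ).map (fun x => x ∘ σ) = infinitePi fun _ : κ => μ := by
  convert infinitePi_map_piCongrLeft (fun _ : κ => μ) σ.symm using 2
  ext x i
  simp [MeasurableEquiv.coe_piCongrLeft, Equiv.piCongrLeft_apply]

theorem infinitePi_map_add_comp_equiv {κ : Type*} [AddMonoid α] [MeasurableAdd₂ α]
    (μ ν : Measure α) [IsProbabilityMeasure μ] [IsProbabilityMeasure ν] (σ τ : κ ≃ ι) :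
    (infinitePi fun _ : ι => μ.prod ν).map (fun z k => (z (σ k)).1 + (z (τ k)).2)
      = infinitePi fun _ : κ => μ ∗ ν := by
  have hfactor : (fun (z : ι → α × α) k => (z (σ k)).1 + (z (τ k)).2)
      = (fun p k => p.1 k + p.2 k) ∘ Prod.map (· ∘ σ) (· ∘ τ) ∘
          MeasurableEquiv.arrowProdEquivProdArrow α α ι := rfl
  rw [hfactor, ← map_map (by fun_prop) (by fun_prop), ← map_map (by fun_prop) (by fun_prop),
    infinitePi_map_arrowProdEquivProdArrow, ← map_prod_map _ _ (by fun_prop) (by fun_prop),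
    infinitePi_map_comp_equiv, infinitePi_map_comp_equiv,
    infinitePi_prod_map_pi _ _ fun _ => measurable_add]
  rfl

end MeasureTheory.Measure

/-- For each `ρ > 0` the product Gamma measure `ν_ρ` is invariant for the infinite silo
model: if `η ~ ν_ρ` and the fractions `U` are iid uniform on `[0,1]` independent of `η`,
then `η₁(i) = η(i-1)U(i-1) + η(i+1)(1-U(i+1))` again has law `ν_ρ`. -/
theorem nuRho_invariant_for_ISM (ρ : ℝ) (hρ : 0 < ρ)
    (ν κ : Measure (ℤ → ℝ))
    (hν : IsProductLaw (gammaMeasure 2 (2 / ρ)) ν) (hκ : IsProductLaw unif01 κ) :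
    ((ν.prod κ).map fun p => ismStep p.2 p.1) = ν := by
  have hr : 0 < 2 / ρ := by positivity
  have := isProbabilityMeasure_gammaMeasure two_pos hr
  have := isProbabilityMeasure_expMeasure hr
  have hstep : (fun p : (ℤ → ℝ) × (ℤ → ℝ) => ismStep p.2 p.1)
      = (fun z i => (z (i - 1)).1 + (z (i + 1)).2) ∘
          fun p i => (p.1 i * p.2 i, p.1 i * (1 - p.2 i)) := rfl
  rw [hν.eq_infinitePi, hκ.eq_infinitePi, hstep, ← Measure.map_map (by fun_prop) (by fun_prop),
    Measure.infinitePi_prod_map_pi _ _ (f := fun _ q => (q.1 * q.2, q.1 * (1 - q.2)))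
      fun _ => by fun_prop,
    map_gammaMeasure_two_prod_unif01 hr.le, ← expMeasure_conv_expMeasure hr.le]
  exact Measure.infinitePi_map_add_comp_equiv _ _ (Equiv.subRight 1) (Equiv.addRight 1)
end
end

section
/- Let X_t and Y_t be two silo processes on [0,∞)^{Λ^N} driven by the same families (U_t(i)) and (V_t(i)), with (deterministic) initial conditions satisfying X_0(i) ≥ Y_0(i) for all i ∈ Λ^N. Then for every i ∈ Λ^N, X_t(i) − Y_t(i) → 0 almost surely as t → ∞. -/
open MeasureTheory ProbabilityTheory Filter

noncomputable section

/-- `F` is a doubly-indexed family of iid real random variables with common law `m`. -/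
def IsIIDFam {Ω : Type*} [MeasurableSpace Ω] (P : Measure Ω) (m : Measure ℝ)
    (F : ℕ → ℤ → Ω → ℝ) : Prop :=
  (∀ t i, Measurable (F t i)) ∧
    iIndepFun (fun (p : ℕ × ℤ) ω => F p.1 p.2 ω) P ∧
    ∀ t i, P.map (F t i) = m

/-!
The difference `D_t = X_t - Y_t` of two coupled silo processes follows the silo dynamics without
added grains, which is linear in `D_t` and keeps it nonnegative. Pairing `D_t` with the Dirichlet
eigenvector `φ j = sin (π j / (N + 1))` of the discrete Laplacian on `Λ^N` gives a Lyapunov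
function: `U_t(j)` is uniform and independent of `D_t`, so
`E ⟨φ, D_{t+1}⟩ = cos (π / (N + 1)) E ⟨φ, D_t⟩`. The means decay geometrically, hence
`∑_t ⟨φ, D_t⟩` is integrable, finite almost surely, and `⟨φ, D_t⟩ → 0`; as `φ > 0` on `Λ^N`,
every coordinate of `D_t` tends to `0`.
-/

namespace SiloCoupling

open Real Finset

def sinMode (N : ℕ) (j : ℤ) : ℝ := sin (π * j / (N + 1))

lemma sinMode_nonneg {N : ℕ} {j : ℤ} (h0 : 0 ≤ j) (h1 : j ≤ N + 1) : 0 ≤ sinMode N j := by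
  have hj : (j : ℝ) ≤ N + 1 := by exact_mod_cast h1
  refine sin_nonneg_of_nonneg_of_le_pi (by positivity) ?_
  rw [div_le_iff₀ (by positivity)]
  exact mul_le_mul_of_nonneg_left hj pi_pos.le

lemma sinMode_pos {N : ℕ} {j : ℤ} (hj : j ∈ Icc 1 (N : ℤ)) : 0 < sinMode N j := by
  have hj0 : (0 : ℝ) < j := by exact_mod_cast (mem_Icc.1 hj).1
  have hj1 : (j : ℝ) < N + 1 := by exact_mod_cast Int.lt_add_one_iff.2 (mem_Icc.1 hj).2
  refine sin_pos_of_pos_of_lt_pi (by positivity) ?_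
  rw [div_lt_iff₀ (by positivity)]
  exact mul_lt_mul_of_pos_left hj1 pi_pos

lemma sinMode_zero (N : ℕ) : sinMode N 0 = 0 := by simp [sinMode]

lemma sinMode_natCast_add_one (N : ℕ) : sinMode N (N + 1) = 0 := by
  have : ((N : ℝ) + 1) ≠ 0 := by positivity
  simp [sinMode, mul_div_assoc, div_self this]

lemma sinMode_sub_one_add_sinMode_add_one (N : ℕ) (j : ℤ) :
    sinMode N (j - 1) + sinMode N (j + 1) = 2 * cos (π / (N + 1)) * sinMode N j := by
  have hsub : π * ((j : ℝ) - 1) / (N + 1) = π * j / (N + 1) - π / (N + 1) := by ring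
  have hadd : π * ((j : ℝ) + 1) / (N + 1) = π * j / (N + 1) + π / (N + 1) := by ring
  simp only [sinMode, Int.cast_sub, Int.cast_add, Int.cast_one, hsub, hadd, sin_sub, sin_add]
  ring

lemma cos_pi_div_natCast_add_one_lt_one (N : ℕ) : cos (π / (N + 1)) < 1 := by
  have hN : (1 : ℝ) ≤ N + 1 := by simp
  calc cos (π / (N + 1)) < cos 0 :=
        cos_lt_cos_of_nonneg_of_le_pi le_rfl (div_le_self pi_pos.le hN) (by positivity)
    _ = 1 := cos_zero

def sinModeMass (N : ℕ) (d : ℤ → ℝ) : ℝ := ∑ j ∈ Icc 1 (N : ℤ), sinMode N j * d j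

lemma sum_comp_add_eq_sum {G M : Type*} [AddCommGroup G] [AddCommMonoid M] (s : Finset G)
    (c : G) {F : G → M} (hF : ∀ k, F k ≠ 0 → k ∈ s ∧ k - c ∈ s) :
    ∑ j ∈ s, F (j + c) = ∑ k ∈ s, F k :=
  sum_bij_ne_zero (fun j _ _ => j + c) (fun j _ hj => (hF _ hj).1)
    (fun _ _ _ _ _ _ h => add_right_cancel h)
    (fun k _ hk => ⟨k - c, by simpa using (hF k hk).2, by simpa using hk, sub_add_cancel k c⟩)
    (fun _ _ _ => rfl)

lemma trunc_apply_of_mem {N : ℕ} {k : ℤ} (hk : k ∈ Icc 1 (N : ℤ)) (w : ℤ → ℝ) :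
    trunc N w k = w k :=
  if_pos (mem_Icc.1 hk)

lemma trunc_apply_of_not_mem {N : ℕ} {k : ℤ} (hk : k ∉ Icc 1 (N : ℤ)) (w : ℤ → ℝ) :
    trunc N w k = 0 :=
  if_neg (by simpa using hk)

lemma siloStep_sub_siloStep (N : ℕ) (u v x y : ℤ → ℝ) :
    siloStep N u v x - siloStep N u v y = siloStep N u 0 (x - y) := by
  ext k
  simp only [siloStep, trunc, Pi.sub_apply, Pi.zero_apply]
  split_ifs <;> ring

lemma siloStep_nonneg {N : ℕ} {u v w : ℤ → ℝ} (hu : ∀ k, u k ∈ Set.Icc (0 : ℝ) 1)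
    (hv : 0 ≤ v) (hw : ∀ k ∈ Icc 1 (N : ℤ), 0 ≤ w k) (k : ℤ) : 0 ≤ siloStep N u v w k := by
  have htrunc : ∀ j, 0 ≤ trunc N w j := fun j => by
    by_cases hj : j ∈ Icc 1 (N : ℤ)
    · rw [trunc_apply_of_mem hj]; exact hw j hj
    · rw [trunc_apply_of_not_mem hj]
  by_cases hk : k ∈ Icc 1 (N : ℤ)
  · rw [siloStep, trunc_apply_of_mem hk]
    exact add_nonneg (add_nonneg (hv k) (mul_nonneg (htrunc _) (hu _).1))
      (mul_nonneg (htrunc _) (sub_nonneg.2 (hu _).2))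
  · rw [siloStep, trunc_apply_of_not_mem hk]

/-- Summation by parts; there are no boundary terms because `sinMode N` vanishes at `0` and
`N + 1`. -/
lemma sinModeMass_siloStep_zero (N : ℕ) (u d : ℤ → ℝ) :
    sinModeMass N (siloStep N u 0 d) =
      ∑ k ∈ Icc 1 (N : ℤ), d k * (sinMode N (k - 1) * u k + sinMode N (k + 1) * (1 - u k)) := by
  set S := Icc 1 (N : ℤ)
  have hstep : ∀ j ∈ S, sinMode N j * siloStep N u 0 d j =
      sinMode N j * (trunc N d (j + 1) * u (j + 1)) +
        sinMode N j * (trunc N d (j - 1) * (1 - u (j - 1))) := fun j hj => by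
    rw [siloStep, trunc_apply_of_mem hj, Pi.zero_apply]; ring
  have hsupp : ∀ {k : ℤ} {a b : ℝ}, a * (trunc N d k * b) ≠ 0 → k ∈ S := fun {k} _ _ hk =>
    by_contra fun h => hk (by rw [trunc_apply_of_not_mem h, zero_mul, mul_zero])
  have hleft : ∑ j ∈ S, sinMode N j * (trunc N d (j + 1) * u (j + 1)) =
      ∑ k ∈ S, sinMode N (k - 1) * (trunc N d k * u k) := by
    rw [← sum_comp_add_eq_sum S 1 (F := fun k => sinMode N (k - 1) * (trunc N d k * u k))]
    · simp only [add_sub_cancel_right]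
    intro k hk
    have hkS : k ∈ S := hsupp hk
    have : k ≠ 1 := by rintro rfl; exact hk (by rw [sub_self, sinMode_zero, zero_mul])
    simp only [S, mem_Icc] at hkS ⊢; omega
  have hright : ∑ j ∈ S, sinMode N j * (trunc N d (j - 1) * (1 - u (j - 1))) =
      ∑ k ∈ S, sinMode N (k + 1) * (trunc N d k * (1 - u k)) := by
    rw [← sum_comp_add_eq_sum S (-1) (F := fun k => sinMode N (k + 1) * (trunc N d k * (1 - u k)))]
    · simp only [← sub_eq_add_neg, sub_add_cancel]
    intro k hk
    have hkS : k ∈ S := hsupp hk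
    have : k ≠ N := by rintro rfl; exact hk (by rw [sinMode_natCast_add_one, zero_mul])
    simp only [S, mem_Icc] at hkS ⊢; omega
  rw [sinModeMass, sum_congr rfl hstep, sum_add_distrib, hleft, hright, ← sum_add_distrib]
  refine sum_congr rfl fun k hk => ?_
  rw [trunc_apply_of_mem hk]; ring

lemma sinModeMass_nonneg {N : ℕ} {d : ℤ → ℝ} (hd : ∀ k ∈ Icc 1 (N : ℤ), 0 ≤ d k) :
    0 ≤ sinModeMass N d :=
  sum_nonneg fun j hj => mul_nonneg (sinMode_pos hj).le (hd j hj)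

lemma sinMode_mul_le_sinModeMass {N : ℕ} {d : ℤ → ℝ} (hd : ∀ k ∈ Icc 1 (N : ℤ), 0 ≤ d k)
    {i : ℤ} (hi : i ∈ Icc 1 (N : ℤ)) : sinMode N i * d i ≤ sinModeMass N d :=
  single_le_sum (f := fun j => sinMode N j * d j)
    (fun j hj => mul_nonneg (sinMode_pos hj).le (hd j hj)) hi

lemma measurable_siloStep (N : ℕ) :
    Measurable fun p : (ℤ → ℝ) × (ℤ → ℝ) × (ℤ → ℝ) => siloStep N p.1 p.2.1 p.2.2 := by
  refine measurable_pi_lambda _ fun k => ?_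
  simp only [siloStep, trunc]
  split_ifs <;> fun_prop

lemma ofReal_sum_mul {ι : Type*} {s : Finset ι} {a b : ι → ℝ} (ha : ∀ k ∈ s, 0 ≤ a k)
    (hb : ∀ k ∈ s, 0 ≤ b k) :
    ENNReal.ofReal (∑ k ∈ s, a k * b k) =
      ∑ k ∈ s, ENNReal.ofReal (a k) * ENNReal.ofReal (b k) := by
  rw [ENNReal.ofReal_sum_of_nonneg fun k hk => mul_nonneg (ha k hk) (hb k hk)]
  exact sum_congr rfl fun k hk => ENNReal.ofReal_mul (ha k hk)

lemma lintegral_unif01_ofReal_affine {a b : ℝ} (ha : 0 ≤ a) (hb : 0 ≤ b) :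
    ∫⁻ x, ENNReal.ofReal (a * x + b * (1 - x)) ∂unif01 = ENNReal.ofReal ((a + b) / 2) := by
  have hnn : 0 ≤ᵐ[unif01] fun x => a * x + b * (1 - x) := by
    filter_upwards [ae_restrict_mem measurableSet_Icc] with x hx
    exact add_nonneg (mul_nonneg ha hx.1) (mul_nonneg hb (sub_nonneg.2 hx.2))
  have hint : Integrable (fun x => a * x + b * (1 - x)) unif01 :=
    (by fun_prop : Continuous fun x : ℝ => a * x + b * (1 - x)).integrableOn_Icc
  rw [← ofReal_integral_eq_lintegral_ofReal hint hnn, unif01, integral_Icc_eq_integral_Ioc,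
    ← intervalIntegral.integral_of_le zero_le_one]
  congr 1
  have hlin : ∀ x : ℝ, a * x + b * (1 - x) = (a - b) * x + b := fun x => by ring
  simp only [hlin]
  rw [intervalIntegral.integral_add (by apply Continuous.intervalIntegrable; fun_prop)
    intervalIntegrable_const, intervalIntegral.integral_const_mul, integral_id,
    intervalIntegral.integral_const]
  norm_num
  ring

theorem ae_tendsto_zero_of_lintegral_le_geometric {α : Type*} [MeasurableSpace α]
    {μ : Measure α} {f : ℕ → α → ENNReal} (hf : ∀ t, AEMeasurable (f t) μ) {r : ENNReal}
    (hr : r < 1) (h0 : ∫⁻ a, f 0 a ∂μ ≠ ⊤)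
    (hstep : ∀ t, ∫⁻ a, f (t + 1) a ∂μ ≤ r * ∫⁻ a, f t a ∂μ) :
    ∀ᵐ a ∂μ, Tendsto (fun t => f t a) atTop (nhds 0) := by
  have hgeom : ∀ t, ∫⁻ a, f t a ∂μ ≤ r ^ t * ∫⁻ a, f 0 a ∂μ := by
    intro t
    induction t with
    | zero => simp
    | succ t ih =>
      calc ∫⁻ a, f (t + 1) a ∂μ ≤ r * ∫⁻ a, f t a ∂μ := hstep t
        _ ≤ r * (r ^ t * ∫⁻ a, f 0 a ∂μ) := by gcongr
        _ = r ^ (t + 1) * ∫⁻ a, f 0 a ∂μ := by ring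
  have hsum : ∫⁻ a, ∑' t, f t a ∂μ ≠ ⊤ := by
    rw [lintegral_tsum hf]
    refine ne_top_of_le_ne_top ?_ (ENNReal.tsum_le_tsum hgeom)
    rw [ENNReal.tsum_mul_right, ENNReal.tsum_geometric]
    exact ENNReal.mul_ne_top (ENNReal.inv_ne_top.2 (tsub_pos_of_lt hr).ne') h0
  filter_upwards [ae_lt_top' (AEMeasurable.tsum hf) hsum] with a ha
  exact ENNReal.tendsto_atTop_zero_of_tsum_ne_top ha.ne

section

variable {Ω : Type*}

abbrev pastOf (U : ℕ → ℤ → Ω → ℝ) (t : ℕ) : MeasurableSpace Ω :=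
  ⨆ p ∈ {p : ℕ × ℤ | p.1 < t}, MeasurableSpace.comap (U p.1 p.2) inferInstance

variable {U : ℕ → ℤ → Ω → ℝ}

lemma measurable_pastOf {s t : ℕ} (hst : s < t) (k : ℤ) : Measurable[pastOf U t] (U s k) :=
  Measurable.of_comap_le <| le_iSup₂ (f := fun p (_ : p ∈ {p : ℕ × ℤ | p.1 < t}) =>
    MeasurableSpace.comap (U p.1 p.2) inferInstance) (s, k) hst

lemma pastOf_le_succ (t : ℕ) : pastOf U t ≤ pastOf U (t + 1) :=
  biSup_mono fun _ hp => Nat.lt_succ_of_lt hp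

lemma pastOf_le [MeasurableSpace Ω] (hU : ∀ s k, Measurable (U s k)) (t : ℕ) :
    pastOf U t ≤ ‹MeasurableSpace Ω› :=
  iSup₂_le fun p _ => (hU p.1 p.2).comap_le

lemma indepFun_of_measurable_pastOf [MeasurableSpace Ω] {P : Measure Ω}
    (hUm : ∀ s k, Measurable (U s k)) (hind : iIndepFun (fun (p : ℕ × ℤ) ω => U p.1 p.2 ω) P)
    {β : Type*} [MeasurableSpace β] {t : ℕ} {f : Ω → β} (hf : Measurable[pastOf U t] f) (k : ℤ) :
    IndepFun f (U t k) P := by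
  have hpast := indep_iSup_of_disjoint (fun p => (hUm p.1 p.2).comap_le)
    ((iIndepFun_iff_iIndep _ _ _).1 hind) (S := {p | p.1 < t}) (T := {(t, k)})
    (by simp [Set.disjoint_singleton_right])
  rw [IndepFun_iff_Indep]
  exact indep_of_indep_of_le_right (indep_of_indep_of_le_left hpast hf.comap_le)
    (le_iSup₂ (f := fun p (_ : p ∈ ({(t, k)} : Set (ℕ × ℤ))) =>
      MeasurableSpace.comap (fun ω => U p.1 p.2 ω) inferInstance) (t, k) rfl)

end

def linearSilo {Ω : Type*} (N : ℕ) (U : ℕ → ℤ → Ω → ℝ) (d0 : ℤ → ℝ) : ℕ → Ω → ℤ → ℝ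
  | 0 => fun _ => d0
  | t + 1 => fun ω => siloStep N (fun i => U t i ω) 0 (linearSilo N U d0 t ω)

section LinearSilo

variable {Ω : Type*} {U : ℕ → ℤ → Ω → ℝ} {N : ℕ} {d0 : ℤ → ℝ}

lemma linearSilo_nonneg (hd0 : ∀ k ∈ Icc 1 (N : ℤ), 0 ≤ d0 k) {ω : Ω}
    (hω : ∀ s k, U s k ω ∈ Set.Icc (0 : ℝ) 1) (t : ℕ) :
    ∀ k ∈ Icc 1 (N : ℤ), 0 ≤ linearSilo N U d0 t ω k := by
  induction t with
  | zero => exact hd0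
  | succ t ih => exact fun k _ => siloStep_nonneg (hω t) le_rfl ih k

lemma measurable_pastOf_linearSilo (t : ℕ) : Measurable[pastOf U t] (linearSilo N U d0 t) := by
  induction t with
  | zero => exact measurable_const
  | succ t ih =>
    exact (measurable_siloStep N).comp <|
      (@measurable_pi_lambda _ _ _ (pastOf U (t + 1)) _ _
        fun i => measurable_pastOf (Nat.lt_succ_self t) i).prodMk
        (measurable_const.prodMk (ih.mono (pastOf_le_succ t) le_rfl))

lemma sub_eq_linearSilo {V : ℕ → ℤ → Ω → ℝ} {X Y : ℕ → Ω → ℤ → ℝ} {x0 y0 : ℤ → ℝ}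
    (hX0 : ∀ ω, X 0 ω = x0) (hY0 : ∀ ω, Y 0 ω = y0)
    (hXrec : ∀ t ω, X (t + 1) ω = siloStep N (fun i => U t i ω) (fun i => V (t + 1) i ω) (X t ω))
    (hYrec : ∀ t ω, Y (t + 1) ω = siloStep N (fun i => U t i ω) (fun i => V (t + 1) i ω) (Y t ω))
    (t : ℕ) (ω : Ω) : X t ω - Y t ω = linearSilo N U (x0 - y0) t ω := by
  induction t with
  | zero => rw [hX0, hY0, linearSilo]
  | succ t ih => rw [hXrec, hYrec, siloStep_sub_siloStep, ih, linearSilo]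

variable [MeasurableSpace Ω] {P : Measure Ω}

lemma ae_forall_mem_Icc (hU : IsIIDFam P unif01 U) :
    ∀ᵐ ω ∂P, ∀ s k, U s k ω ∈ Set.Icc (0 : ℝ) 1 := by
  simp only [ae_all_iff]
  intro s k
  refine ae_of_ae_map (hU.1 s k).aemeasurable (p := (· ∈ Set.Icc (0 : ℝ) 1)) ?_
  rw [hU.2.2 s k]
  exact ae_restrict_mem measurableSet_Icc

lemma measurable_linearSilo_apply (hU : ∀ s k, Measurable (U s k)) (t : ℕ) (k : ℤ) :
    Measurable fun ω => linearSilo N U d0 t ω k :=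
  (measurable_pi_apply k).comp ((measurable_pastOf_linearSilo t).mono (pastOf_le hU t) le_rfl)

lemma lintegral_ofReal_sinModeMass (hU : IsIIDFam P unif01 U)
    (hd0 : ∀ k ∈ Icc 1 (N : ℤ), 0 ≤ d0 k) (t : ℕ) :
    ∫⁻ ω, ENNReal.ofReal (sinModeMass N (linearSilo N U d0 t ω)) ∂P =
      ∑ k ∈ Icc 1 (N : ℤ),
        ENNReal.ofReal (sinMode N k) * ∫⁻ ω, ENNReal.ofReal (linearSilo N U d0 t ω k) ∂P := by
  have hmeas k := (measurable_linearSilo_apply (N := N) (d0 := d0) hU.1 t k).ennreal_ofReal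
  calc ∫⁻ ω, ENNReal.ofReal (sinModeMass N (linearSilo N U d0 t ω)) ∂P
      = ∫⁻ ω, ∑ k ∈ Icc 1 (N : ℤ),
          ENNReal.ofReal (sinMode N k) * ENNReal.ofReal (linearSilo N U d0 t ω k) ∂P := by
        refine lintegral_congr_ae ?_
        filter_upwards [ae_forall_mem_Icc hU] with ω hω
        exact ofReal_sum_mul (fun k hk => (sinMode_pos hk).le) (linearSilo_nonneg hd0 hω t)
    _ = _ := by
        rw [lintegral_finsetSum _ fun k _ => (hmeas k).const_mul _]
        exact sum_congr rfl fun k _ => lintegral_const_mul _ (hmeas k)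

lemma lintegral_ofReal_linearSilo_mul_affine (hU : IsIIDFam P unif01 U) (t : ℕ) {k : ℤ}
    (hk : k ∈ Icc 1 (N : ℤ)) :
    ∫⁻ ω, ENNReal.ofReal (linearSilo N U d0 t ω k) *
        ENNReal.ofReal (sinMode N (k - 1) * U t k ω + sinMode N (k + 1) * (1 - U t k ω)) ∂P =
      ENNReal.ofReal (cos (π / (N + 1))) *
        (ENNReal.ofReal (sinMode N k) * ∫⁻ ω, ENNReal.ofReal (linearSilo N U d0 t ω k) ∂P) := by
  obtain ⟨hk1, hk2⟩ := mem_Icc.1 hk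
  set ψ : ℝ → ENNReal := fun x =>
    ENNReal.ofReal (sinMode N (k - 1) * x + sinMode N (k + 1) * (1 - x)) with hψ_def
  have hψ : Measurable ψ := by fun_prop
  have hpast : Measurable[pastOf U t] fun ω => linearSilo N U d0 t ω k :=
    (measurable_pi_apply k).comp (measurable_pastOf_linearSilo t)
  have hsplit : ∫⁻ ω, ENNReal.ofReal (linearSilo N U d0 t ω k) * ψ (U t k ω) ∂P =
      (∫⁻ ω, ENNReal.ofReal (linearSilo N U d0 t ω k) ∂P) * ∫⁻ ω, ψ (U t k ω) ∂P :=
    lintegral_mul_eq_lintegral_mul_lintegral_of_indepFun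
      (measurable_linearSilo_apply hU.1 t k).ennreal_ofReal (hψ.comp (hU.1 t k))
      ((indepFun_of_measurable_pastOf hU.1 hU.2.1 hpast k).comp ENNReal.measurable_ofReal hψ)
  have hmean : ∫⁻ ω, ψ (U t k ω) ∂P = ENNReal.ofReal (cos (π / (N + 1)) * sinMode N k) := by
    rw [← lintegral_map hψ (hU.1 t k), hU.2.2 t k, hψ_def, lintegral_unif01_ofReal_affine
      (sinMode_nonneg (by omega) (by omega)) (sinMode_nonneg (by omega) (by omega)),
      sinMode_sub_one_add_sinMode_add_one]
    ring_nf
  rw [hsplit, hmean, ENNReal.ofReal_mul' (sinMode_pos hk).le]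
  ring

lemma lintegral_ofReal_sinModeMass_succ (hU : IsIIDFam P unif01 U)
    (hd0 : ∀ k ∈ Icc 1 (N : ℤ), 0 ≤ d0 k) (t : ℕ) :
    ∫⁻ ω, ENNReal.ofReal (sinModeMass N (linearSilo N U d0 (t + 1) ω)) ∂P =
      ENNReal.ofReal (cos (π / (N + 1))) *
        ∫⁻ ω, ENNReal.ofReal (sinModeMass N (linearSilo N U d0 t ω)) ∂P := by
  have haffine : ∀ ω, (∀ s k, U s k ω ∈ Set.Icc (0 : ℝ) 1) → ∀ k ∈ Icc 1 (N : ℤ),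
      0 ≤ sinMode N (k - 1) * U t k ω + sinMode N (k + 1) * (1 - U t k ω) := by
    intro ω hω k hk
    obtain ⟨hk1, hk2⟩ := mem_Icc.1 hk
    exact add_nonneg (mul_nonneg (sinMode_nonneg (by omega) (by omega)) (hω t k).1)
      (mul_nonneg (sinMode_nonneg (by omega) (by omega)) (sub_nonneg.2 (hω t k).2))
  calc ∫⁻ ω, ENNReal.ofReal (sinModeMass N (linearSilo N U d0 (t + 1) ω)) ∂P
      = ∫⁻ ω, ∑ k ∈ Icc 1 (N : ℤ), ENNReal.ofReal (linearSilo N U d0 t ω k) *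
          ENNReal.ofReal (sinMode N (k - 1) * U t k ω + sinMode N (k + 1) * (1 - U t k ω)) ∂P := by
        refine lintegral_congr_ae ?_
        filter_upwards [ae_forall_mem_Icc hU] with ω hω
        rw [linearSilo, sinModeMass_siloStep_zero]
        exact ofReal_sum_mul (linearSilo_nonneg hd0 hω t) (haffine ω hω)
    _ = ∑ k ∈ Icc 1 (N : ℤ), ENNReal.ofReal (cos (π / (N + 1))) *
          (ENNReal.ofReal (sinMode N k) * ∫⁻ ω, ENNReal.ofReal (linearSilo N U d0 t ω k) ∂P) := by
        rw [lintegral_finsetSum _ fun k _ => by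
          have := measurable_linearSilo_apply (N := N) (d0 := d0) hU.1 t k
          have := hU.1 t k
          fun_prop]
        exact sum_congr rfl fun k hk => lintegral_ofReal_linearSilo_mul_affine hU t hk
    _ = _ := by rw [← mul_sum, lintegral_ofReal_sinModeMass hU hd0]

theorem ae_tendsto_linearSilo_zero (hU : IsIIDFam P unif01 U) [IsFiniteMeasure P]
    (hd0 : ∀ k ∈ Icc 1 (N : ℤ), 0 ≤ d0 k) {i : ℤ} (hi : i ∈ Icc 1 (N : ℤ)) :
    ∀ᵐ ω ∂P, Tendsto (fun t => linearSilo N U d0 t ω i) atTop (nhds 0) := by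
  have hmass := ae_tendsto_zero_of_lintegral_le_geometric
    (f := fun t ω => ENNReal.ofReal (sinModeMass N (linearSilo N U d0 t ω)))
    (fun t => (Finset.measurable_sum _ fun k _ =>
      (measurable_linearSilo_apply hU.1 t k).const_mul _).ennreal_ofReal.aemeasurable)
    (ENNReal.ofReal_lt_one.2 (cos_pi_div_natCast_add_one_lt_one N))
    (by simpa [linearSilo] using ENNReal.mul_ne_top ENNReal.ofReal_ne_top (measure_ne_top P .univ))
    (fun t => (lintegral_ofReal_sinModeMass_succ hU hd0 t).le)
  filter_upwards [hmass, ae_forall_mem_Icc hU] with ω hω hU01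
  have hnn := linearSilo_nonneg hd0 hU01
  have hreal : Tendsto (fun t => sinModeMass N (linearSilo N U d0 t ω)) atTop (nhds 0) := by
    have hlim := (ENNReal.tendsto_toReal ENNReal.zero_ne_top).comp hω
    rw [ENNReal.toReal_zero] at hlim
    exact hlim.congr fun t => ENNReal.toReal_ofReal (sinModeMass_nonneg (hnn t))
  refine squeeze_zero (fun t => hnn t i hi) (fun t => ?_)
    (by simpa using hreal.div_const (sinMode N i))
  rw [le_div_iff₀' (sinMode_pos hi)]
  exact sinMode_mul_le_sinModeMass (hnn t) hi

end LinearSilo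

end SiloCoupling

open SiloCoupling

theorem coupled_silo_processes_merge_general (N : ℕ)
    {Ω : Type*} [MeasurableSpace Ω] (P : Measure Ω) [IsProbabilityMeasure P]
    (U V : ℕ → ℤ → Ω → ℝ)
    (hU : IsIIDFam P unif01 U)
    (X Y : ℕ → Ω → ℤ → ℝ) (x0 y0 : ℤ → ℝ)
    (h0 : ∀ i : ℤ, 1 ≤ i → i ≤ (N : ℤ) → y0 i ≤ x0 i)
    (hX0 : ∀ ω, X 0 ω = x0) (hY0 : ∀ ω, Y 0 ω = y0)
    (hXrec : ∀ (t : ℕ) (ω : Ω),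
      X (t + 1) ω = siloStep N (fun i => U t i ω) (fun i => V (t + 1) i ω) (X t ω))
    (hYrec : ∀ (t : ℕ) (ω : Ω),
      Y (t + 1) ω = siloStep N (fun i => U t i ω) (fun i => V (t + 1) i ω) (Y t ω)) :
    ∀ i : ℤ, 1 ≤ i → i ≤ (N : ℤ) →
      ∀ᵐ ω ∂P, Filter.Tendsto (fun t => X t ω i - Y t ω i) Filter.atTop (nhds 0) := by
  intro i hi1 hi2
  have hd0 : ∀ k ∈ Finset.Icc 1 (N : ℤ), 0 ≤ (x0 - y0) k := fun k hk =>
    sub_nonneg.2 (h0 k (Finset.mem_Icc.1 hk).1 (Finset.mem_Icc.1 hk).2)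
  filter_upwards [ae_tendsto_linearSilo_zero hU hd0 (Finset.mem_Icc.2 ⟨hi1, hi2⟩)] with ω hω
  simpa only [← sub_eq_linearSilo hX0 hY0 hXrec hYrec, Pi.sub_apply] using hω

/-- Two silo processes coupled through the same uniform fractions `U` and weights `V`,
started from ordered deterministic initial conditions, approach each other: for every
site `i ∈ Λ^N`, `X_t(i) - Y_t(i) → 0` almost surely as `t → ∞`. -/
theorem coupled_silo_processes_merge (N : ℕ) (hN : 1 ≤ N)
    (νV : Measure ℝ) (hνV : IsVLaw νV)
    {Ω : Type*} [MeasurableSpace Ω] (P : Measure Ω) [IsProbabilityMeasure P]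
    (U V : ℕ → ℤ → Ω → ℝ)
    (hU : IsIIDFam P unif01 U) (hV : IsIIDFam P νV V)
    (hUV : IndepFun (fun ω (p : ℕ × ℤ) => U p.1 p.2 ω)
      (fun ω (p : ℕ × ℤ) => V p.1 p.2 ω) P)
    (X Y : ℕ → Ω → ℤ → ℝ) (x0 y0 : ℤ → ℝ)
    (hy0 : ∀ i : ℤ, 1 ≤ i → i ≤ (N : ℤ) → 0 ≤ y0 i)
    (h0 : ∀ i : ℤ, 1 ≤ i → i ≤ (N : ℤ) → y0 i ≤ x0 i)
    (hX0 : ∀ ω, X 0 ω = x0) (hY0 : ∀ ω, Y 0 ω = y0)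
    (hXrec : ∀ (t : ℕ) (ω : Ω),
      X (t + 1) ω = siloStep N (fun i => U t i ω) (fun i => V (t + 1) i ω) (X t ω))
    (hYrec : ∀ (t : ℕ) (ω : Ω),
      Y (t + 1) ω = siloStep N (fun i => U t i ω) (fun i => V (t + 1) i ω) (Y t ω)) :
    ∀ i : ℤ, 1 ≤ i → i ≤ (N : ℤ) →
      ∀ᵐ ω ∂P, Filter.Tendsto (fun t => X t ω i - Y t ω i) Filter.atTop (nhds 0) :=
  coupled_silo_processes_merge_general N P U V hU X Y x0 y0 h0 hX0 hY0 hXrec hYrec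
end
end
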